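/- arXiv:2103.12392 — 13 statements merged into one kernel-verified Lean document; each statement's English description precedes it below -/
import Mathlib

section
/- Let n ≥ 1 and let g, h₁, h₂, ρ₁, ρ₂ be positive real numbers and u₁, u₂ ∈ ℝⁿ. For ξ ∈ ℝⁿ \ {0} consider the quadratic polynomial in ω: q_ξ(ω) = (ρ₁ coth(h₁|ξ|) + ρ₂ coth(h₂|ξ|)) ω² + 2(ρ₁ (ξ·u₁) coth(h₁|ξ|) + ρ₂ (ξ·u₂) coth(h₂|ξ|)) ω + ρ₁ (ξ·u₁)² coth(h₁|ξ|) + ρ₂ (ξ·u₂)² coth(h₂|ξ|) − (ρ₂ − ρ₁) g |ξ|. Then every complex root ω of q_ξ is real for every ξ ∈ ℝⁿ \ {0} if and only if u₁ = u₂ and ρ₂ ≥ ρ₁. -/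
/-!
Multiplying `q_ξ` by its leading coefficient `a` completes the square,
`a q_ξ(ω) = (aω + b)² - (b² - ac)`, so all roots are real iff `b² - ac ≥ 0`. With `cᵢ = coth (hᵢ|ξ|) > 1` this discriminant is
`(ρ₁c₁ + ρ₂c₂)(ρ₂ - ρ₁)g|ξ| - ρ₁ρ₂c₁c₂(ξ·(u₁ - u₂))²`. If `ρ₂ < ρ₁` both terms are negative. If
`u₁ ≠ u₂`, along `ξ = t(u₁ - u₂)` the gravity term grows linearly in `t` (since `coth` decreases)
while the shear term grows quadratically, so it is negative for large `t`.
-/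

open scoped RealInnerProductSpace

/-- The hyperbolic cotangent `coth x = cosh x / sinh x`. -/
noncomputable def Real.coth (x : ℝ) : ℝ := Real.cosh x / Real.sinh x

namespace Real

theorem coth_eq_one_add {x : ℝ} (hx : x ≠ 0) : coth x = 1 + 2 / (exp (2 * x) - 1) := by
  have hsub : exp (2 * x) - 1 ≠ 0 := by
    rw [sub_ne_zero, Ne, exp_eq_one_iff]; simpa using hx
  have hx2 : exp (2 * x) = exp x ^ 2 := by rw [← exp_nat_mul]; ring_nf
  rw [hx2] at hsub ⊢
  have hE : exp x ≠ 0 := (exp_pos x).ne'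
  rw [coth, cosh_eq, sinh_eq, exp_neg]
  field_simp
  ring

theorem coth_nonneg {x : ℝ} (hx : 0 ≤ x) : 0 ≤ coth x :=
  div_nonneg (cosh_pos x).le (sinh_nonneg_iff.2 hx)

theorem one_lt_coth {x : ℝ} (hx : 0 < x) : 1 < coth x := by
  rw [coth_eq_one_add hx.ne', lt_add_iff_pos_right]
  exact div_pos two_pos (sub_pos.2 (one_lt_exp_iff.2 (by positivity)))

theorem coth_le_coth {x y : ℝ} (hx : 0 < x) (hxy : x ≤ y) : coth y ≤ coth x := by
  rw [coth_eq_one_add hx.ne', coth_eq_one_add (hx.trans_le hxy).ne', add_le_add_iff_left]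
  gcongr
  exact sub_pos.2 (one_lt_exp_iff.2 (by positivity))

end Real

theorem Complex.im_eq_zero_of_sq_eq_ofReal {z : ℂ} {r : ℝ} (hr : 0 ≤ r) (h : z ^ 2 = r) :
    z.im = 0 := by
  have : z ^ 2 = ((√r : ℝ) : ℂ) ^ 2 := by rw [h, ← Complex.ofReal_pow, Real.sq_sqrt hr]
  rcases sq_eq_sq_iff_eq_or_eq_neg.1 this with h | h <;> simp [h]

open Complex in
theorem quadratic_roots_real_iff {a b c : ℝ} (ha : a ≠ 0) :
    (∀ ω : ℂ, (a : ℂ) * ω ^ 2 + 2 * (b : ℂ) * ω + c = 0 → ω.im = 0) ↔ 0 ≤ b ^ 2 - a * c := by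
  have hroot : ∀ ω : ℂ, (a : ℂ) * ω ^ 2 + 2 * b * ω + c = 0 ↔
      (a * ω + b) ^ 2 = ((b ^ 2 - a * c : ℝ) : ℂ) := fun ω => by
    rw [← sub_eq_zero (a := (_ : ℂ) ^ 2), ofReal_sub, ofReal_mul, ofReal_pow,
      show (a * ω + b) ^ 2 - (b ^ 2 - a * c) = (a : ℂ) * (a * ω ^ 2 + 2 * b * ω + c) by ring,
      mul_eq_zero, ofReal_eq_zero, or_iff_right ha]
  simp only [hroot]
  refine ⟨fun H => ?_, fun hD ω hω => ?_⟩
  · by_contra! hD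
    set s := √(-(b ^ 2 - a * c))
    have hs : s ^ 2 = -(b ^ 2 - a * c) := Real.sq_sqrt (by linarith)
    have hspos : 0 < s := Real.sqrt_pos.2 (by linarith)
    have := H ((-b + s * I) / a) (by
      rw [mul_div_cancel₀ _ (ofReal_ne_zero.2 ha), neg_add_cancel_comm, mul_pow, I_sq,
        ← ofReal_pow, hs]
      push_cast; ring)
    simp [ha, hspos.ne'] at this
  · simpa [ha] using im_eq_zero_of_sq_eq_ofReal hD hω

section Discriminant

variable {E : Type*} [NormedAddCommGroup E] [InnerProductSpace ℝ E]

open Real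

/-- The reduced discriminant `b² - ac` of `q_ξ`, written in terms of `w = u₁ - u₂`. -/
noncomputable def dispersionDiscr (g h₁ h₂ ρ₁ ρ₂ : ℝ) (w ξ : E) : ℝ :=
  (ρ₁ * coth (h₁ * ‖ξ‖) + ρ₂ * coth (h₂ * ‖ξ‖)) * (ρ₂ - ρ₁) * g * ‖ξ‖
    - ρ₁ * ρ₂ * coth (h₁ * ‖ξ‖) * coth (h₂ * ‖ξ‖) * ⟪ξ, w⟫ ^ 2

variable {g h₁ h₂ ρ₁ ρ₂ : ℝ}

theorem dispersionDiscr_nonneg (hg : 0 ≤ g) (hh₁ : 0 ≤ h₁) (hh₂ : 0 ≤ h₂) (hρ₁ : 0 ≤ ρ₁)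
    (hρ : ρ₁ ≤ ρ₂) (ξ : E) : 0 ≤ dispersionDiscr g h₁ h₂ ρ₁ ρ₂ 0 ξ := by
  have := coth_nonneg (mul_nonneg hh₁ (norm_nonneg ξ))
  have := coth_nonneg (mul_nonneg hh₂ (norm_nonneg ξ))
  have := hρ₁.trans hρ
  rw [dispersionDiscr, inner_zero_right, zero_pow two_ne_zero, mul_zero, sub_zero]
  exact mul_nonneg (mul_nonneg (mul_nonneg (by positivity) (sub_nonneg.2 hρ)) hg) (norm_nonneg ξ)

theorem dispersionDiscr_neg_of_lt (hg : 0 < g) (hh₁ : 0 < h₁) (hh₂ : 0 < h₂) (hρ₁ : 0 < ρ₁)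
    (hρ₂ : 0 < ρ₂) (hρ : ρ₂ < ρ₁) (w : E) {ξ : E} (hξ : ξ ≠ 0) :
    dispersionDiscr g h₁ h₂ ρ₁ ρ₂ w ξ < 0 := by
  have hN := norm_pos_iff.2 hξ
  have := one_lt_coth (mul_pos hh₁ hN)
  have := one_lt_coth (mul_pos hh₂ hN)
  have hgravity : (ρ₁ * coth (h₁ * ‖ξ‖) + ρ₂ * coth (h₂ * ‖ξ‖)) * (ρ₂ - ρ₁) * g * ‖ξ‖ < 0 :=
    mul_neg_of_neg_of_pos (mul_neg_of_neg_of_pos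
      (mul_neg_of_pos_of_neg (by positivity) (sub_neg.2 hρ)) hg) hN
  have hshear : 0 ≤ ρ₁ * ρ₂ * coth (h₁ * ‖ξ‖) * coth (h₂ * ‖ξ‖) * ⟪ξ, w⟫ ^ 2 := by positivity
  rw [dispersionDiscr]
  linarith

theorem exists_dispersionDiscr_neg (hh₁ : 0 < h₁) (hh₂ : 0 < h₂) (hρ₁ : 0 < ρ₁) (hρ₂ : 0 < ρ₂)
    {w : E} (hw : w ≠ 0) : ∃ ξ : E, ξ ≠ 0 ∧ dispersionDiscr g h₁ h₂ ρ₁ ρ₂ w ξ < 0 := by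
  have hw' := norm_pos_iff.2 hw
  set C₁ := coth (h₁ * ‖w‖)
  set C₂ := coth (h₂ * ‖w‖)
  have := one_lt_coth (mul_pos hh₁ hw')
  have := one_lt_coth (mul_pos hh₂ hw')
  set A := ρ₁ * ρ₂ * ‖w‖ ^ 4
  set K := (ρ₁ * C₁ + ρ₂ * C₂) * |(ρ₂ - ρ₁) * g| * ‖w‖
  have hA : 0 < A := by positivity
  -- the gravity term is at most `K t` and the shear term at least `A t²`; `A t = A + K`
  set t := 1 + K / A
  have ht : 1 ≤ t := le_add_of_nonneg_right (by positivity)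
  have hAt : A * t = A + K := by rw [mul_add, mul_div_cancel₀ _ hA.ne', mul_one]
  refine ⟨t • w, smul_ne_zero (by positivity) hw, ?_⟩
  have hnorm : ‖t • w‖ = t * ‖w‖ := by rw [norm_smul, Real.norm_of_nonneg (by positivity)]
  have hinner : ⟪t • w, w⟫ = t * ‖w‖ ^ 2 := by
    rw [real_inner_smul_left, real_inner_self_eq_norm_sq]
  have hc : ∀ h > 0, 1 < coth (h * (t * ‖w‖)) ∧ coth (h * (t * ‖w‖)) ≤ coth (h * ‖w‖) :=
    fun h hh => ⟨one_lt_coth (by positivity), coth_le_coth (by positivity)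
      (mul_le_mul_of_nonneg_left (le_mul_of_one_le_left hw'.le ht) hh.le)⟩
  obtain ⟨hc₁, hc₁'⟩ := hc h₁ hh₁
  obtain ⟨hc₂, hc₂'⟩ := hc h₂ hh₂
  rw [dispersionDiscr, hnorm, hinner]
  set c₁ := coth (h₁ * (t * ‖w‖))
  set c₂ := coth (h₂ * (t * ‖w‖))
  have hgravity : (ρ₁ * c₁ + ρ₂ * c₂) * (ρ₂ - ρ₁) * g * (t * ‖w‖) ≤ K * t := by
    have : (ρ₁ * c₁ + ρ₂ * c₂) * ((ρ₂ - ρ₁) * g) ≤ (ρ₁ * C₁ + ρ₂ * C₂) * |(ρ₂ - ρ₁) * g| :=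
      calc _ ≤ (ρ₁ * c₁ + ρ₂ * c₂) * |(ρ₂ - ρ₁) * g| :=
            mul_le_mul_of_nonneg_left (le_abs_self _) (by positivity)
        _ ≤ _ := by gcongr
    calc _ = (ρ₁ * c₁ + ρ₂ * c₂) * ((ρ₂ - ρ₁) * g) * (t * ‖w‖) := by ring
      _ ≤ (ρ₁ * C₁ + ρ₂ * C₂) * |(ρ₂ - ρ₁) * g| * (t * ‖w‖) := by gcongr
      _ = K * t := by ring
  have hshear : A * t ^ 2 ≤ ρ₁ * ρ₂ * c₁ * c₂ * (t * ‖w‖ ^ 2) ^ 2 :=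
    calc A * t ^ 2 = ρ₁ * ρ₂ * 1 * 1 * (t * ‖w‖ ^ 2) ^ 2 := by ring
      _ ≤ _ := by gcongr
  calc _ ≤ K * t - A * t ^ 2 := by linarith
    _ = -(A * t) := by linear_combination (-t) * hAt
    _ < 0 := neg_neg_of_pos (by positivity)

theorem forall_dispersionDiscr_nonneg_iff [Nontrivial E] (hg : 0 < g) (hh₁ : 0 < h₁)
    (hh₂ : 0 < h₂) (hρ₁ : 0 < ρ₁) (hρ₂ : 0 < ρ₂) (w : E) :
    (∀ ξ : E, ξ ≠ 0 → 0 ≤ dispersionDiscr g h₁ h₂ ρ₁ ρ₂ w ξ) ↔ w = 0 ∧ ρ₁ ≤ ρ₂ := by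
  refine ⟨fun H => ⟨?_, ?_⟩, ?_⟩
  · by_contra hw
    obtain ⟨ξ, hξ, hneg⟩ := exists_dispersionDiscr_neg hh₁ hh₂ hρ₁ hρ₂ hw
    exact (H ξ hξ).not_gt hneg
  · by_contra! hρ
    obtain ⟨ξ, hξ⟩ := exists_ne (0 : E)
    exact (H ξ hξ).not_gt (dispersionDiscr_neg_of_lt hg hh₁ hh₂ hρ₁ hρ₂ hρ w hξ)
  · rintro ⟨rfl, hρ⟩ ξ -
    exact dispersionDiscr_nonneg hg.le hh₁.le hh₂.le hρ₁.le hρ ξ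

end Discriminant

/-- The linear dispersion relation of the full model for interfacial gravity waves around a
uniform flow has only real roots for every nonzero wave vector if and only if `u₁ = u₂` and
`ρ₂ ≥ ρ₁`. -/
theorem stmt_0 (n : ℕ) (hn : 1 ≤ n) (g h₁ h₂ ρ₁ ρ₂ : ℝ)
    (hg : 0 < g) (hh₁ : 0 < h₁) (hh₂ : 0 < h₂) (hρ₁ : 0 < ρ₁) (hρ₂ : 0 < ρ₂)
    (u₁ u₂ : EuclideanSpace ℝ (Fin n)) :
    (∀ ξ : EuclideanSpace ℝ (Fin n), ξ ≠ 0 → ∀ ω : ℂ,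
        ((ρ₁ * Real.coth (h₁ * ‖ξ‖) + ρ₂ * Real.coth (h₂ * ‖ξ‖) : ℝ) : ℂ) * ω ^ 2
          + 2 * ((ρ₁ * ⟪ξ, u₁⟫ * Real.coth (h₁ * ‖ξ‖)
              + ρ₂ * ⟪ξ, u₂⟫ * Real.coth (h₂ * ‖ξ‖) : ℝ) : ℂ) * ω
          + ((ρ₁ * ⟪ξ, u₁⟫ ^ 2 * Real.coth (h₁ * ‖ξ‖)
              + ρ₂ * ⟪ξ, u₂⟫ ^ 2 * Real.coth (h₂ * ‖ξ‖)
              - (ρ₂ - ρ₁) * g * ‖ξ‖ : ℝ) : ℂ) = 0 → ω.im = 0)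
      ↔ (u₁ = u₂ ∧ ρ₁ ≤ ρ₂) := by
  have : NeZero n := ⟨by omega⟩
  have hcoeff : ∀ ξ : EuclideanSpace ℝ (Fin n), ξ ≠ 0 →
      ρ₁ * Real.coth (h₁ * ‖ξ‖) + ρ₂ * Real.coth (h₂ * ‖ξ‖) ≠ 0 := fun ξ hξ => by
    have hN := norm_pos_iff.2 hξ
    have := Real.one_lt_coth (mul_pos hh₁ hN)
    have := Real.one_lt_coth (mul_pos hh₂ hN)
    positivity
  rw [forall₂_congr fun ξ hξ => quadratic_roots_real_iff (hcoeff ξ hξ), ← sub_eq_zero (a := u₁),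
    ← forall_dispersionDiscr_nonneg_iff hg hh₁ hh₂ hρ₁ hρ₂]
  refine forall₂_congr fun ξ _ => iff_of_eq (congrArg (0 ≤ ·) ?_)
  rw [dispersionDiscr, inner_sub_right]
  ring
end

section
/- Let N ≥ 0 be an integer and let p₀, p₁, …, p_N be integers with 0 = p₀ < p₁ < ⋯ < p_N. Define the real symmetric (N+1)×(N+1) matrices A₀ = (1/(p_i+p_j+1))_{0≤i,j≤N} and A₁ = (p_i p_j/(p_i+p_j−1))_{0≤i,j≤N}, with the convention 0/0 = 0, and for ξ ∈ ℝⁿ set 𝒜(ξ) = |ξ|² A₀ + A₁. Then for every ξ ∈ ℝⁿ with ξ ≠ 0, the symmetric matrix 𝒜(ξ) is positive definite. -/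
/-!
Both matrices are Gram matrices in `L²(0, 1)`: `A₀` of the monomials `t ^ pᵢ` and `A₁` of their
derivatives `pᵢ t ^ (pᵢ - 1)`, so `vᵀ 𝒜(ξ) v = |ξ|² ‖f‖² + ‖f'‖²` for `f = ∑ vᵢ t ^ pᵢ`.
Gram matrices are positive semidefinite, and since the exponents are distinct, `f` is a nonzero
polynomial when `v ≠ 0`; it then vanishes only at finitely many points, so `‖f‖² > 0`.
-/

open Matrix Polynomial Function Set

noncomputable def intervalGram {ι : Type*} (a b : ℝ) (φ : ι → ℝ → ℝ) : Matrix ι ι ℝ :=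
  of fun i j => ∫ t in a..b, φ i t * φ j t

section IntervalGram

variable {ι : Type*} {a b : ℝ} {φ : ι → ℝ → ℝ}

lemma isHermitian_intervalGram : (intervalGram a b φ).IsHermitian := by
  ext i j
  simp only [conjTranspose_apply, intervalGram, of_apply, star_trivial, mul_comm]

variable [Fintype ι]

lemma dotProduct_intervalGram_mulVec (hφ : ∀ i, Continuous (φ i)) (v : ι → ℝ) :
    v ⬝ᵥ intervalGram a b φ *ᵥ v = ∫ t in a..b, (∑ i, v i * φ i t) ^ 2 := by
  simp_rw [sq, Finset.sum_mul_sum]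
  rw [intervalIntegral.integral_finsetSum fun i _ =>
    Continuous.intervalIntegrable (by fun_prop) a b]
  simp only [dotProduct, mulVec, intervalGram, of_apply, Finset.mul_sum]
  refine Finset.sum_congr rfl fun i _ => ?_
  rw [intervalIntegral.integral_finsetSum fun j _ =>
    Continuous.intervalIntegrable (by fun_prop) a b]
  refine Finset.sum_congr rfl fun j _ => ?_
  rw [← mul_assoc, mul_comm _ (v j), ← mul_assoc, ← intervalIntegral.integral_const_mul]
  congr 1 with t
  ring

lemma posSemidef_intervalGram (hab : a ≤ b) (hφ : ∀ i, Continuous (φ i)) :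
    (intervalGram a b φ).PosSemidef := by
  refine posSemidef_iff_dotProduct_mulVec.mpr ⟨isHermitian_intervalGram, fun v => ?_⟩
  rw [star_trivial, dotProduct_intervalGram_mulVec hφ]
  exact intervalIntegral.integral_nonneg hab fun t _ => sq_nonneg _

lemma posDef_intervalGram (hab : a < b) (hφ : ∀ i, Continuous (φ i))
    (hindep : ∀ v : ι → ℝ, v ≠ 0 → ∃ t ∈ Icc a b, ∑ i, v i * φ i t ≠ 0) :
    (intervalGram a b φ).PosDef := by
  refine posDef_iff_dotProduct_mulVec.mpr ⟨isHermitian_intervalGram, fun v hv => ?_⟩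
  rw [star_trivial, dotProduct_intervalGram_mulVec hφ]
  obtain ⟨t, ht, hne⟩ := hindep v hv
  exact intervalIntegral.integral_pos hab (by fun_prop) (fun _ _ => sq_nonneg _)
    ⟨t, ht, by positivity⟩

end IntervalGram

lemma exists_sum_mul_pow_ne_zero {ι : Type*} [Fintype ι] {p : ι → ℕ} (hp : Injective p)
    {s : Set ℝ} (hs : s.Infinite) {v : ι → ℝ} (hv : v ≠ 0) : ∃ t ∈ s, ∑ i, v i * t ^ p i ≠ 0 := by
  set q : ℝ[X] := ∑ i, monomial (p i) (v i)
  have hq : q ≠ 0 := by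
    contrapose! hv
    exact funext <| Fintype.linearIndependent_iff.mp
      ((basisMonomials ℝ).linearIndependent.comp p hp) v
      (by simpa [coe_basisMonomials, smul_monomial, q] using hv)
  by_contra! h
  exact hq <| eq_zero_of_infinite_isRoot q <| hs.mono fun t ht => by
    simpa [q, eval_finsetSum] using h t ht

lemma integral_pow_mul_pow (k l : ℕ) :
    ∫ t in (0 : ℝ)..1, t ^ k * t ^ l = 1 / ((k : ℝ) + l + 1) := by
  simp [← pow_add]

-- For `k * l = 0` both sides vanish, the right one through `0 / 0 = 0` when `k + l = 1`.
lemma integral_mul_pow_pred_mul_mul_pow_pred (k l : ℕ) :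
    ∫ t in (0 : ℝ)..1, (k * t ^ (k - 1)) * (l * t ^ (l - 1)) = k * l / ((k : ℝ) + l - 1) := by
  rcases Nat.eq_zero_or_pos k with rfl | hk
  · simp
  rcases Nat.eq_zero_or_pos l with rfl | hl
  · simp
  simp only [mul_mul_mul_comm _ (_ ^ _), intervalIntegral.integral_const_mul,
    integral_pow_mul_pow, Nat.cast_pred hk, Nat.cast_pred hl]
  field_simp
  ring

theorem stmt_1_general (n N : ℕ) (p : Fin (N + 1) → ℕ)
    (hp : StrictMono p)
    (ξ : EuclideanSpace ℝ (Fin n)) (hξ : ξ ≠ 0) :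
    Matrix.PosDef
      (‖ξ‖ ^ 2 • (Matrix.of fun i j : Fin (N + 1) =>
          (1 : ℝ) / ((p i : ℝ) + (p j : ℝ) + 1))
        + Matrix.of fun i j : Fin (N + 1) =>
          ((p i : ℝ) * (p j : ℝ)) / ((p i : ℝ) + (p j : ℝ) - 1)) := by
  have hA₀ : (of fun i j : Fin (N + 1) => (1 : ℝ) / ((p i : ℝ) + (p j : ℝ) + 1)) =
      intervalGram 0 1 fun i t => t ^ p i := by
    ext i j
    simp only [intervalGram, of_apply, integral_pow_mul_pow]
  have hA₁ : (of fun i j : Fin (N + 1) => ((p i : ℝ) * (p j : ℝ)) / ((p i : ℝ) + (p j : ℝ) - 1)) =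
      intervalGram 0 1 fun i t => p i * t ^ (p i - 1) := by
    ext i j
    simp only [intervalGram, of_apply, integral_mul_pow_pred_mul_mul_pow_pred]
  rw [hA₀, hA₁]
  have hmonomials := posDef_intervalGram zero_lt_one (by fun_prop) fun v hv =>
    exists_sum_mul_pow_ne_zero hp.injective (Icc_infinite zero_lt_one) hv
  exact (hmonomials.smul (by positivity)).add_posSemidef
    (posSemidef_intervalGram zero_le_one (by fun_prop))

/-- For `0 = p₀ < p₁ < ⋯ < p_N`, the matrix `𝒜(ξ) = |ξ|² A₀ + A₁` with
`A₀ = (1/(pᵢ+pⱼ+1))` and `A₁ = (pᵢpⱼ/(pᵢ+pⱼ−1))` is positive definite for every `ξ ≠ 0`. -/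
theorem stmt_1 (n N : ℕ) (hn : 1 ≤ n) (p : Fin (N + 1) → ℕ)
    (hp0 : p 0 = 0) (hp : StrictMono p)
    (ξ : EuclideanSpace ℝ (Fin n)) (hξ : ξ ≠ 0) :
    Matrix.PosDef
      (‖ξ‖ ^ 2 • (Matrix.of fun i j : Fin (N + 1) =>
          (1 : ℝ) / ((p i : ℝ) + (p j : ℝ) + 1))
        + Matrix.of fun i j : Fin (N + 1) =>
          ((p i : ℝ) * (p j : ℝ)) / ((p i : ℝ) + (p j : ℝ) - 1)) :=
  stmt_1_general n N p hp ξ hξ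
end

section
/- Let N ≥ 0 be an integer and let p₀, p₁, …, p_N be integers with 0 = p₀ < p₁ < ⋯ < p_N. Define the real symmetric (N+1)×(N+1) matrices A₀ = (1/(p_i+p_j+1))_{0≤i,j≤N} and A₁ = (p_i p_j/(p_i+p_j−1))_{0≤i,j≤N}, with the convention 0/0 = 0, and for ξ ∈ ℝⁿ set 𝒜(ξ) = |ξ|² A₀ + A₁. Then there exists a constant c₀ > 0 such that det 𝒜̃(ξ) ≥ c₀ for all ξ ∈ ℝⁿ. -/
/-!
Both matrices are Gram matrices on `(0, 1]`: `A₀` of the monomials `x ^ pᵢ`, `A₁` of their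
derivatives. Adding the first row of `𝒜̃` to the others replaces `𝒜` by `𝒜 + 𝟙𝟙ᵀ` without
changing the determinant, and for positive definite `K` the Schur complement gives
`det K̃ = det K · 𝟙ᵀK⁻¹𝟙 > 0`. Now `t A₀ + A₁ + 𝟙𝟙ᵀ` is positive definite for `t ≥ 0`: at `v` the
quadratic form of `A₁ + 𝟙𝟙ᵀ` is `∫₀¹ q'² + q(1)²` with `q = ∑ vᵢ xᵖⁱ`, which vanishes only if
`q` is a constant vanishing at `1`. Finally `det 𝒜̃(ξ)` is a polynomial in `t = |ξ|²` that is
positive on `[0, ∞)`, hence bounded below there by a positive constant.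
-/

/-- For a square matrix `A` of size `m`, `tilde A` is the `(m+1) × (m+1)` matrix with block
form `[[0, 𝟙ᵀ], [−𝟙, A]]`, where `𝟙 = (1,…,1)ᵀ`. -/
noncomputable def tilde {m : ℕ} (A : Matrix (Fin m) (Fin m) ℝ) :
    Matrix (Fin 1 ⊕ Fin m) (Fin 1 ⊕ Fin m) ℝ :=
  Matrix.fromBlocks 0 (Matrix.of fun _ _ => (1 : ℝ)) (Matrix.of fun _ _ => (-1 : ℝ)) A

open Matrix Polynomial MeasureTheory Set Function

section Tilde

variable {m : ℕ}

lemma tilde_add_ones (H : Matrix (Fin m) (Fin m) ℝ) :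
    tilde (H + of fun _ _ => 1) = fromBlocks 1 0 (of fun _ _ => 1) 1 * tilde H := by
  rw [tilde, tilde, fromBlocks_multiply]
  congr 1 <;> ext <;> simp [Matrix.mul_apply, add_comm]

lemma det_tilde_add_ones (H : Matrix (Fin m) (Fin m) ℝ) :
    (tilde (H + of fun _ _ => 1)).det = (tilde H).det := by
  rw [tilde_add_ones, det_mul, det_fromBlocks_zero₁₂]
  simp

lemma det_tilde_pos_of_posDef [NeZero m] {K : Matrix (Fin m) (Fin m) ℝ} (hK : K.PosDef) :
    0 < (tilde K).det := by
  have : Invertible K := hK.isUnit.invertible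
  have hones : (fun _ => (1 : ℝ)) ≠ (0 : Fin m → ℝ) := fun h => by simpa using congrFun h 0
  rw [tilde, det_fromBlocks₂₂, invOf_eq_nonsing_inv, det_fin_one]
  refine mul_pos hK.det_pos ?_
  convert hK.inv.dotProduct_mulVec_pos hones using 1
  simp [dotProduct, mulVec, Matrix.mul_apply, Finset.sum_comm (γ := Fin m)]

lemma tilde_smul_add (t : ℝ) (A B : Matrix (Fin m) (Fin m) ℝ) :
    tilde (t • A + B) = t • fromBlocks 0 0 0 A + tilde B := by
  ext (i | i) (j | j) <;> simp [tilde]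

end Tilde

lemma Matrix.exists_eval_eq_det_smul_add {n R : Type*} [Fintype n] [DecidableEq n] [CommRing R]
    (A B : Matrix n n R) : ∃ P : R[X], ∀ t, P.eval t = (t • A + B).det :=
  ⟨((X : R[X]) • A.map C + B.map C).det, fun t => by
    rw [← coe_evalRingHom, RingHom.map_det]
    congr
    ext
    simp [Matrix.smul_apply, mul_comm (A _ _)]⟩

lemma Polynomial.exists_pos_le_eval_of_pos {P : ℝ[X]} (hP : ∀ t, 0 ≤ t → 0 < P.eval t) :
    ∃ c > 0, ∀ t, 0 ≤ t → c ≤ P.eval t := by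
  rcases le_or_gt P.degree 0 with hd | hd
  · rw [eq_C_of_degree_le_zero hd] at hP ⊢
    exact ⟨_, by simpa using hP 0 le_rfl, fun t _ => by simp⟩
  obtain ⟨T, hT⟩ := ((P.abs_tendsto_atTop hd).eventually_ge_atTop 1).exists_forall_of_atTop
  obtain ⟨t₀, ht₀, hmin⟩ := isCompact_Icc.exists_isMinOn (nonempty_Icc.2 (le_max_right T 0))
    P.continuous.continuousOn
  refine ⟨min (P.eval t₀) 1, lt_min (hP t₀ ht₀.1) one_pos, fun t ht => ?_⟩
  rcases le_or_gt t (max T 0) with htT | htT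
  · exact (min_le_left _ _).trans (hmin ⟨ht, htT⟩)
  · have := hT t ((le_max_left T 0).trans htT.le)
    rw [abs_of_pos (hP t ht)] at this
    exact (min_le_right _ _).trans this

lemma dotProduct_mulVec_integral_gram {α ι : Type*} [MeasurableSpace α] {μ : Measure α}
    [Fintype ι] {g : ι → α → ℝ} (hg : ∀ i j, Integrable (fun x => g i x * g j x) μ)
    (v : ι → ℝ) :
    v ⬝ᵥ (of (fun i j => ∫ x, g i x * g j x ∂μ) *ᵥ v) = ∫ x, (∑ i, v i * g i x) ^ 2 ∂μ := by
  have hint : ∀ i j, Integrable (fun x => v i * v j * (g i x * g j x)) μ :=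
    fun i j => (hg i j).const_mul _
  calc v ⬝ᵥ (of (fun i j => ∫ x, g i x * g j x ∂μ) *ᵥ v)
      = ∑ i, ∑ j, ∫ x, v i * v j * (g i x * g j x) ∂μ := by
        simp only [dotProduct, mulVec, of_apply, Finset.mul_sum, integral_const_mul]
        exact Finset.sum_congr rfl fun i _ => Finset.sum_congr rfl fun j _ => by ring
    _ = ∫ x, ∑ i, ∑ j, v i * v j * (g i x * g j x) ∂μ := by
        rw [integral_finsetSum _ fun i _ => integrable_finsetSum _ fun j _ => hint i j]
        exact Finset.sum_congr rfl fun i _ => (integral_finsetSum _ fun j _ => hint i j).symm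
    _ = ∫ x, (∑ i, v i * g i x) ^ 2 ∂μ := by
        congr 1 with x
        rw [sq, Finset.sum_mul_sum]
        exact Finset.sum_congr rfl fun i _ => Finset.sum_congr rfl fun j _ => by ring

lemma posSemidef_integral_gram {α ι : Type*} [MeasurableSpace α] {μ : Measure α}
    [Fintype ι] {g : ι → α → ℝ} (hg : ∀ i j, Integrable (fun x => g i x * g j x) μ) :
    (of fun i j => ∫ x, g i x * g j x ∂μ).PosSemidef := by
  refine .of_dotProduct_mulVec_nonneg ?_ fun v => ?_
  · ext i j
    simp [mul_comm]
  · rw [star_trivial, dotProduct_mulVec_integral_gram hg]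
    exact integral_nonneg fun x => sq_nonneg _

lemma Polynomial.setIntegral_sq_eval_pos {q : ℝ[X]} (hq : q ≠ 0) {a b : ℝ} (hab : a < b) :
    0 < ∫ x in Ioc a b, q.eval x ^ 2 := by
  have hcont : Continuous fun x => q.eval x ^ 2 := by fun_prop
  rw [setIntegral_pos_iff_support_of_nonneg_ae (.of_forall fun x => sq_nonneg _)
    hcont.integrableOn_Ioc]
  have hsub : Ioc a b \ {x | q.IsRoot x} ⊆ Function.support (fun x => q.eval x ^ 2) ∩ Ioc a b :=
    fun x hx => ⟨pow_ne_zero _ hx.2, hx.1⟩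
  refine lt_of_lt_of_le ?_ (measure_mono hsub)
  rw [measure_sdiff_null ((Polynomial.finite_setOfPred_isRoot hq).measure_zero _)]
  simpa using hab

lemma setIntegral_Ioc_pow_mul_pow (a b : ℕ) :
    ∫ x in Ioc (0 : ℝ) 1, x ^ a * x ^ b = 1 / ((a : ℝ) + b + 1) := by
  simp_rw [← pow_add, ← intervalIntegral.integral_of_le zero_le_one, integral_pow]
  push_cast
  simp

lemma setIntegral_Ioc_mul_pow_pred_mul (a b : ℕ) :
    ∫ x in Ioc (0 : ℝ) 1, (a * x ^ (a - 1)) * (b * x ^ (b - 1)) = a * b / ((a : ℝ) + b - 1) := by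
  rcases Nat.eq_zero_or_pos a with rfl | ha
  · simp
  rcases Nat.eq_zero_or_pos b with rfl | hb
  · simp
  have hexp : a - 1 + (b - 1) = a + b - 2 := by omega
  have hcast : ((a + b - 2 : ℕ) : ℝ) + 1 = a + b - 1 := by
    rw [Nat.cast_sub (by omega)]
    push_cast
    ring
  simp_rw [mul_mul_mul_comm, ← pow_add, hexp, integral_const_mul,
    ← intervalIntegral.integral_of_le zero_le_one, integral_pow, hcast]
  simp [div_eq_mul_inv]

lemma Polynomial.coeff_sum_C_mul_X_pow {ι : Type*} [Fintype ι] {p : ι → ℕ} (hp : Injective p)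
    (v : ι → ℝ) (j : ι) : (∑ i, C (v i) * X ^ p i).coeff (p j) = v j := by
  simp only [finsetSum_coeff, coeff_C_mul_X_pow]
  rw [Finset.sum_eq_single j (fun i _ hi => if_neg (hp.ne hi.symm)) (by simp), if_pos rfl]

lemma Polynomial.sum_C_mul_X_pow_ne_zero {ι : Type*} [Fintype ι] {p : ι → ℕ} (hp : Injective p)
    {v : ι → ℝ} (hv : v ≠ 0) : ∑ i, C (v i) * X ^ p i ≠ 0 := fun h =>
  hv <| _root_.funext fun j => by simpa [h] using (coeff_sum_C_mul_X_pow hp v j).symm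

section Moments

variable {ι : Type*} (p : ι → ℕ)

noncomputable def A₀ : Matrix ι ι ℝ := of fun i j => 1 / ((p i : ℝ) + p j + 1)

noncomputable def A₁ : Matrix ι ι ℝ := of fun i j => (p i : ℝ) * p j / ((p i : ℝ) + p j - 1)

lemma A₀_eq_integral :
    A₀ p = of fun i j => ∫ x in Ioc (0 : ℝ) 1, x ^ p i * x ^ p j := by
  ext i j
  simp [A₀, setIntegral_Ioc_pow_mul_pow]

lemma A₁_eq_integral :
    A₁ p = of fun i j => ∫ x in Ioc (0 : ℝ) 1, (p i * x ^ (p i - 1)) * (p j * x ^ (p j - 1)) := by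
  ext i j
  simp [A₁, setIntegral_Ioc_mul_pow_pred_mul]

lemma posSemidef_A₀ [Fintype ι] : (A₀ p).PosSemidef :=
  A₀_eq_integral p ▸ posSemidef_integral_gram fun _ _ => Continuous.integrableOn_Ioc (by fun_prop)

variable {p}

lemma posDef_A₁_add_ones [Fintype ι] (hp : Injective p) : (A₁ p + of fun _ _ => 1).PosDef := by
  refine .of_dotProduct_mulVec_pos ?_ fun v hv => ?_
  · ext i j
    simp [A₁, add_comm, mul_comm]
  set q : ℝ[X] := ∑ i, C (v i) * X ^ p i
  have hA₁ : v ⬝ᵥ (A₁ p *ᵥ v) = ∫ x in Ioc 0 1, (derivative q).eval x ^ 2 := by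
    rw [A₁_eq_integral, dotProduct_mulVec_integral_gram
      fun i j => Continuous.integrableOn_Ioc (by fun_prop)]
    simp [q, eval_finsetSum, derivative_X_pow]
  have hones : v ⬝ᵥ ((of fun _ _ => 1) *ᵥ v) = q.eval 1 ^ 2 := by
    simp [q, eval_finsetSum, dotProduct, mulVec, sq, Finset.sum_mul]
  have hq : q ≠ 0 := sum_C_mul_X_pow_ne_zero hp hv
  rw [star_trivial, add_mulVec, dotProduct_add, hA₁, hones]
  by_cases hq' : derivative q = 0
  · have hq₁ : q.eval 1 ≠ 0 := by
      rw [eq_C_of_derivative_eq_zero hq'] at hq ⊢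
      simpa using hq
    positivity
  · exact add_pos_of_pos_of_nonneg (setIntegral_sq_eval_pos hq' one_pos) (sq_nonneg _)

end Moments

theorem stmt_2_general (n N : ℕ) (p : Fin (N + 1) → ℕ) (hp : StrictMono p) :
    ∃ c₀ > (0 : ℝ), ∀ ξ : EuclideanSpace ℝ (Fin n),
      c₀ ≤ (tilde
        (‖ξ‖ ^ 2 • (Matrix.of fun i j : Fin (N + 1) =>
            (1 : ℝ) / ((p i : ℝ) + (p j : ℝ) + 1))
          + Matrix.of fun i j : Fin (N + 1) =>
            ((p i : ℝ) * (p j : ℝ)) / ((p i : ℝ) + (p j : ℝ) - 1))).det := by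
  obtain ⟨P, hP⟩ := exists_eval_eq_det_smul_add (fromBlocks 0 0 0 (A₀ p)) (tilde (A₁ p))
  have hdet : ∀ t, P.eval t = (tilde (t • A₀ p + A₁ p)).det := by
    simp [hP, tilde_smul_add]
  have hpos : ∀ t, 0 ≤ t → 0 < P.eval t := fun t ht => by
    rw [hdet, ← det_tilde_add_ones, add_assoc]
    exact det_tilde_pos_of_posDef
      (.posSemidef_add ((posSemidef_A₀ p).smul ht) (posDef_A₁_add_ones hp.injective))
  obtain ⟨c, hc, hcP⟩ := exists_pos_le_eval_of_pos hpos
  exact ⟨c, hc, fun ξ => hdet _ ▸ hcP _ (by positivity)⟩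

/-- For `0 = p₀ < p₁ < ⋯ < p_N` and `𝒜(ξ) = |ξ|² A₀ + A₁`, there is a constant `c₀ > 0` such
that `det 𝒜̃(ξ) ≥ c₀` for all `ξ`. -/
theorem stmt_2 (n N : ℕ) (hn : 1 ≤ n) (p : Fin (N + 1) → ℕ)
    (hp0 : p 0 = 0) (hp : StrictMono p) :
    ∃ c₀ > (0 : ℝ), ∀ ξ : EuclideanSpace ℝ (Fin n),
      c₀ ≤ (tilde
        (‖ξ‖ ^ 2 • (Matrix.of fun i j : Fin (N + 1) =>
            (1 : ℝ) / ((p i : ℝ) + (p j : ℝ) + 1))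
          + Matrix.of fun i j : Fin (N + 1) =>
            ((p i : ℝ) * (p j : ℝ)) / ((p i : ℝ) + (p j : ℝ) - 1))).det :=
  stmt_2_general n N p hp
end

section
/- Let N ≥ 0 be an integer and let p₀, p₁, …, p_N be integers with 0 = p₀ < p₁ < ⋯ < p_N. Define the real symmetric (N+1)×(N+1) matrices A₀ = (1/(p_i+p_j+1))_{0≤i,j≤N} and A₁ = (p_i p_j/(p_i+p_j−1))_{0≤i,j≤N}, with the convention 0/0 = 0, and for ξ ∈ ℝⁿ set 𝒜(ξ) = |ξ|² A₀ + A₁. Then there exists a real polynomial P of degree exactly N whose coefficient of X^N equals det A₀, such that det 𝒜(ξ) = |ξ|² · P(|ξ|²) for all ξ ∈ ℝⁿ. -/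
/-!
`A₀` is the Gram matrix of the monomials `t ^ pᵢ` in `L²(0, 1)`, hence positive definite, so
`det (X • A₀ + A₁)` is a polynomial of degree `N + 1` with leading coefficient `det A₀`. Its
constant term is `det A₁`, which vanishes because `p₀ = 0` makes the first row of `A₁` zero;
so `X` divides it, and `P` is the quotient.
-/

open Polynomial Matrix Function MeasureTheory intervalIntegral Set

lemma integral_sq_eval_pos {q : ℝ[X]} (hq : q ≠ 0) {a b : ℝ} (hab : a < b) :
    0 < ∫ t in a..b, q.eval t ^ 2 := by
  have hcont : Continuous fun t => q.eval t ^ 2 := by fun_prop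
  rw [integral_pos_iff_support_of_nonneg_ae (.of_forall fun t => sq_nonneg _)
    (hcont.intervalIntegrable _ _)]
  refine ⟨hab, ?_⟩
  have hroots : volume {t : ℝ | q.IsRoot t} = 0 := (finite_setOfPred_isRoot hq).measure_zero _
  have hsub : Ioc a b \ {t | q.IsRoot t} ⊆ support (fun t => q.eval t ^ 2) ∩ Ioc a b :=
    fun t ht => ⟨pow_ne_zero 2 ht.2, ht.1⟩
  calc (0 : ENNReal) < volume (Ioc a b \ {t | q.IsRoot t}) := by
        rw [measure_sdiff_null hroots]
        simpa using hab
    _ ≤ _ := measure_mono hsub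

section MomentMatrix

variable {ι : Type*} [Fintype ι]

lemma dotProduct_mulVec_one_div_add_add_one (p : ι → ℕ) (x : ι → ℝ) :
    x ⬝ᵥ (of (fun i j => (1 : ℝ) / ((p i : ℝ) + (p j : ℝ) + 1)) *ᵥ x) =
      ∫ t in (0 : ℝ)..1, (∑ i, x i * t ^ p i) ^ 2 := by
  have hsq : ∀ t : ℝ,
      (∑ i, x i * t ^ p i) ^ 2 = ∑ i, ∑ j, x i * x j * t ^ (p i + p j) := by
    intro t
    rw [sq, Finset.sum_mul_sum]
    refine Finset.sum_congr rfl fun i _ => Finset.sum_congr rfl fun j _ => ?_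
    ring
  have hint : ∀ i, ∫ t in (0 : ℝ)..1, ∑ j, x i * x j * t ^ (p i + p j) =
      ∑ j, x i * x j * (1 / ((p i : ℝ) + (p j : ℝ) + 1)) := by
    intro i
    rw [integral_finsetSum fun j _ => Continuous.intervalIntegrable (by fun_prop) _ _]
    refine Finset.sum_congr rfl fun j _ => ?_
    rw [intervalIntegral.integral_const_mul, integral_pow]
    push_cast
    simp
  simp_rw [hsq]
  rw [integral_finsetSum fun i _ => Continuous.intervalIntegrable (by fun_prop) _ _]
  simp_rw [hint]
  simp only [dotProduct, mulVec, of_apply, Finset.mul_sum]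
  refine Finset.sum_congr rfl fun i _ => Finset.sum_congr rfl fun j _ => ?_
  ring

lemma posDef_of_one_div_add_add_one {p : ι → ℕ} (hp : Injective p) :
    (of fun i j => (1 : ℝ) / ((p i : ℝ) + (p j : ℝ) + 1)).PosDef := by
  classical
  rw [posDef_iff_dotProduct_mulVec]
  refine ⟨by ext i j; simp [add_comm (p i : ℝ)], fun x hx => ?_⟩
  set q : ℝ[X] := ∑ i, C (x i) * X ^ p i
  have hq_eval : ∀ t : ℝ, q.eval t = ∑ i, x i * t ^ p i := fun t => by
    simp [q, eval_finsetSum]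
  have hq_coeff : ∀ i, q.coeff (p i) = x i := by
    intro i
    simp only [q, finsetSum_coeff, coeff_C_mul, coeff_X_pow, hp.eq_iff, mul_ite, mul_one,
      mul_zero, Finset.sum_ite_eq, Finset.mem_univ, if_true]
  obtain ⟨i, hi⟩ := Function.ne_iff.mp hx
  have hq : q ≠ 0 := fun h => hi (by simpa [h] using (hq_coeff i).symm)
  rw [star_trivial, dotProduct_mulVec_one_div_add_add_one]
  simpa only [hq_eval] using integral_sq_eval_pos hq one_pos

end MomentMatrix

section DetPencil

variable {n R : Type*} [Fintype n] [DecidableEq n] [CommRing R]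

lemma eval_det_X_smul_add_C (A B : Matrix n n R) (t : R) :
    (det ((X : R[X]) • A.map C + B.map C)).eval t = det (t • A + B) := by
  rw [← coe_evalRingHom, RingHom.map_det]
  congr 1
  ext i j
  simp [mul_comm t]

lemma det_X_smul_add_C_eq_X_mul_divX (A : Matrix n n R) {B : Matrix n n R} (hB : det B = 0) :
    det ((X : R[X]) • A.map C + B.map C) = X * (det ((X : R[X]) • A.map C + B.map C)).divX := by
  conv_lhs => rw [← X_mul_divX_add (det _)]
  rw [coeff_det_X_add_C_zero, hB, C_0, add_zero]

lemma degree_divX_det_X_smul_add_C {N : ℕ} (hcard : Fintype.card n = N + 1)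
    (A B : Matrix n n R) (hA : det A ≠ 0) :
    (det ((X : R[X]) • A.map C + B.map C)).divX.degree = N := by
  have hcoeff := coeff_det_X_add_C_card A B
  rw [hcard] at hcoeff
  refine degree_eq_of_le_of_coeff_ne_zero ?_ (by rwa [coeff_divX, hcoeff])
  refine degree_le_of_natDegree_le ?_
  have := natDegree_det_X_add_C_le A B
  rw [natDegree_divX_eq_natDegree_tsub_one]
  omega

end DetPencil

theorem stmt_3_general (n N : ℕ) (p : Fin (N + 1) → ℕ)
    (hp0 : p 0 = 0) (hp : StrictMono p) :
    ∃ P : Polynomial ℝ, P.degree = (N : WithBot ℕ) ∧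
      P.coeff N = (Matrix.of fun i j : Fin (N + 1) =>
        (1 : ℝ) / ((p i : ℝ) + (p j : ℝ) + 1)).det ∧
      ∀ ξ : EuclideanSpace ℝ (Fin n),
        (‖ξ‖ ^ 2 • (Matrix.of fun i j : Fin (N + 1) =>
            (1 : ℝ) / ((p i : ℝ) + (p j : ℝ) + 1))
          + Matrix.of fun i j : Fin (N + 1) =>
            ((p i : ℝ) * (p j : ℝ)) / ((p i : ℝ) + (p j : ℝ) - 1)).det
        = ‖ξ‖ ^ 2 * P.eval (‖ξ‖ ^ 2) := by
  set A₀ : Matrix (Fin (N + 1)) (Fin (N + 1)) ℝ :=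
    of fun i j => (1 : ℝ) / ((p i : ℝ) + (p j : ℝ) + 1)
  set A₁ : Matrix (Fin (N + 1)) (Fin (N + 1)) ℝ :=
    of fun i j => ((p i : ℝ) * (p j : ℝ)) / ((p i : ℝ) + (p j : ℝ) - 1)
  have hA₀ : A₀.det ≠ 0 := (posDef_of_one_div_add_add_one hp.injective).det_pos.ne'
  have hA₁ : A₁.det = 0 := det_eq_zero_of_row_eq_zero 0 fun j => by simp [A₁, hp0]
  set P := (det ((X : ℝ[X]) • A₀.map C + A₁.map C)).divX
  refine ⟨P, degree_divX_det_X_smul_add_C (Fintype.card_fin _) A₀ A₁ hA₀, ?_,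
    fun ξ => ?_⟩
  · rw [coeff_divX, ← coeff_det_X_add_C_card A₀ A₁, Fintype.card_fin]
  · rw [← eval_det_X_smul_add_C, det_X_smul_add_C_eq_X_mul_divX A₀ hA₁, eval_mul, eval_X]

/-- For `0 = p₀ < p₁ < ⋯ < p_N` and `𝒜(ξ) = |ξ|² A₀ + A₁`, there is a real polynomial `P` of
degree exactly `N` with leading coefficient `det A₀` such that
`det 𝒜(ξ) = |ξ|² P(|ξ|²)` for all `ξ ∈ ℝⁿ`. -/
theorem stmt_3 (n N : ℕ) (hn : 1 ≤ n) (p : Fin (N + 1) → ℕ)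
    (hp0 : p 0 = 0) (hp : StrictMono p) :
    ∃ P : Polynomial ℝ, P.degree = (N : WithBot ℕ) ∧
      P.coeff N = (Matrix.of fun i j : Fin (N + 1) =>
        (1 : ℝ) / ((p i : ℝ) + (p j : ℝ) + 1)).det ∧
      ∀ ξ : EuclideanSpace ℝ (Fin n),
        (‖ξ‖ ^ 2 • (Matrix.of fun i j : Fin (N + 1) =>
            (1 : ℝ) / ((p i : ℝ) + (p j : ℝ) + 1))
          + Matrix.of fun i j : Fin (N + 1) =>
            ((p i : ℝ) * (p j : ℝ)) / ((p i : ℝ) + (p j : ℝ) - 1)).det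
        = ‖ξ‖ ^ 2 * P.eval (‖ξ‖ ^ 2) :=
  stmt_3_general n N p hp0 hp
end

section
/- Let N ≥ 0 be an integer and let p₀, p₁, …, p_N be integers with 0 = p₀ < p₁ < ⋯ < p_N. Define the real symmetric (N+1)×(N+1) matrices A₀ = (1/(p_i+p_j+1))_{0≤i,j≤N} and A₁ = (p_i p_j/(p_i+p_j−1))_{0≤i,j≤N}, with the convention 0/0 = 0, and for ξ ∈ ℝⁿ set 𝒜(ξ) = |ξ|² A₀ + A₁. Then there exists a real polynomial Q of degree exactly N whose coefficient of X^N equals det Ã₀, such that det 𝒜̃(ξ) = Q(|ξ|²) for all ξ ∈ ℝⁿ. -/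
/-!
Multiplying the border row and column of `𝒜̃(ξ)` by `t = |ξ|²` gives `t • Ã₀ + diag(0, A₁)`, whose
determinant is a polynomial in `t` of degree at most `N + 2` with coefficient `det Ã₀` in degree
`N + 2`; dividing by `t²` gives `Q`. Its degree is exactly `N` because `A₀` is the Gram matrix of
the distinct monomials `t ^ pᵢ` in `L²(0, 1)`, hence positive definite, and the Schur complement
gives `det Ã₀ = det A₀ · 𝟙ᵀ A₀⁻¹ 𝟙 > 0`.
-/

open Polynomial Matrix

section DetTildePoly

variable {m : ℕ} (A₀ A₁ : Matrix (Fin m) (Fin m) ℝ)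

noncomputable def tildeDetPoly : ℝ[X] :=
  (fromBlocks (0 : Matrix (Fin 1) (Fin 1) ℝ[X]) (of fun _ _ => 1) (of fun _ _ => -1)
    ((X : ℝ[X]) • A₀.map C + A₁.map C)).det

theorem eval_tildeDetPoly (x : ℝ) : (tildeDetPoly A₀ A₁).eval x = (tilde (x • A₀ + A₁)).det := by
  rw [tildeDetPoly, ← coe_evalRingHom, RingHom.map_det]
  congr 1
  ext (i | i) (j | j) <;> simp [tilde, mul_comm x]

theorem X_sq_mul_tildeDetPoly :
    X ^ 2 * tildeDetPoly A₀ A₁ =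
      ((X : ℝ[X]) • (tilde A₀).map C + (fromBlocks 0 0 0 A₁).map C).det := by
  set v : Fin 1 ⊕ Fin m → ℝ[X] := Sum.elim (fun _ => X) (fun _ => 1)
  have hv : ∏ i, v i = X := by simp [v, Fintype.prod_sum_type]
  rw [sq, mul_assoc, tildeDetPoly, ← hv, ← det_mul_row, ← det_mul_column]
  congr 1
  ext (i | i) (j | j) <;> simp [v, tilde]

end DetTildePoly

theorem coeff_tildeDetPoly {m : ℕ} (A₀ A₁ : Matrix (Fin (m + 1)) (Fin (m + 1)) ℝ) :
    (tildeDetPoly A₀ A₁).coeff m = (tilde A₀).det := by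
  have hcard : Fintype.card (Fin 1 ⊕ Fin (m + 1)) = m + 2 := by
    simp only [Fintype.card_sum, Fintype.card_unique, Fintype.card_fin]; omega
  rw [← coeff_X_pow_mul _ 2, X_sq_mul_tildeDetPoly, ← hcard, coeff_det_X_add_C_card]

theorem natDegree_tildeDetPoly_le {m : ℕ} (A₀ A₁ : Matrix (Fin (m + 1)) (Fin (m + 1)) ℝ) :
    (tildeDetPoly A₀ A₁).natDegree ≤ m := by
  obtain hP | hP := eq_or_ne (tildeDetPoly A₀ A₁) 0
  · simp [hP]
  have hdeg := natDegree_det_X_add_C_le (tilde A₀) (fromBlocks 0 0 0 A₁)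
  rw [← X_sq_mul_tildeDetPoly, natDegree_X_pow_mul _ hP] at hdeg
  simp only [Fintype.card_sum, Fintype.card_unique, Fintype.card_fin] at hdeg
  omega

theorem integral_sq_eval_pos_s4 {F : ℝ[X]} (hF : F ≠ 0) : 0 < ∫ t in (0 : ℝ)..1, F.eval t ^ 2 := by
  obtain ⟨c, hc, hroot⟩ :=
    (Set.Icc_infinite (zero_lt_one' ℝ)).exists_notMem_finset F.roots.toFinset
  refine intervalIntegral.integral_pos zero_lt_one (F.continuous.pow 2).continuousOn
    (fun t _ => sq_nonneg _) ⟨c, hc, sq_pos_of_ne_zero ?_⟩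
  simpa [hF] using hroot

theorem one_div_add_add_one_eq_integral (a b : ℕ) :
    1 / ((a : ℝ) + b + 1) = ∫ t in (0 : ℝ)..1, t ^ a * t ^ b := by
  simp_rw [← pow_add, integral_pow]
  norm_num

theorem posDef_one_div_add_add_one {ι : Type*} [Fintype ι] {q : ι → ℕ}
    (hq : Function.Injective q) :
    (of fun i j => 1 / ((q i : ℝ) + q j + 1)).PosDef := by
  refine PosDef.of_dotProduct_mulVec_pos ?_ fun x hx => ?_
  · ext i j
    simp [add_comm]
  set F : ℝ[X] := ∑ i, C (x i) * X ^ q i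
  have hF : F ≠ 0 := by
    classical
    obtain ⟨i, hi⟩ := Function.ne_iff.mp hx
    refine fun h => hi ?_
    have := congrArg (coeff · (q i)) h
    simpa [F, finsetSum_coeff, coeff_C_mul_X_pow, hq.eq_iff] using this
  have hquad : star x ⬝ᵥ (of fun i j => 1 / ((q i : ℝ) + q j + 1)) *ᵥ x =
      ∫ t in (0 : ℝ)..1, F.eval t ^ 2 := by
    simp only [F, eval_finsetSum, eval_mul, eval_C, eval_pow, eval_X, sq, Finset.sum_mul_sum]
    rw [intervalIntegral.integral_finsetSum fun i _ =>
      (by fun_prop : Continuous _).intervalIntegrable _ _]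
    simp only [dotProduct, mulVec, Finset.mul_sum, star_trivial, of_apply]
    refine Finset.sum_congr rfl fun i _ => ?_
    rw [intervalIntegral.integral_finsetSum fun j _ =>
      (by fun_prop : Continuous _).intervalIntegrable _ _]
    refine Finset.sum_congr rfl fun j _ => ?_
    rw [one_div_add_add_one_eq_integral, ← intervalIntegral.integral_mul_const,
      ← intervalIntegral.integral_const_mul]
    congr 1 with t
    ring
  exact hquad ▸ integral_sq_eval_pos_s4 hF

theorem det_tilde_pos {m : ℕ} {A : Matrix (Fin (m + 1)) (Fin (m + 1)) ℝ} (hA : A.PosDef) :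
    0 < (tilde A).det := by
  have := invertibleOfIsUnitDet A hA.det_pos.ne'.isUnit
  rw [tilde, det_fromBlocks₂₂]
  refine mul_pos hA.det_pos ?_
  have hone : (fun _ => 1 : Fin (m + 1) → ℝ) ≠ 0 := Function.ne_iff.mpr ⟨0, one_ne_zero⟩
  convert hA.inv.dotProduct_mulVec_pos hone using 1
  simp only [invOf_eq_nonsing_inv, zero_sub, det_unique, Fin.default_eq_zero, Matrix.neg_apply,
    mul_apply, of_apply, one_mul, mul_neg, mul_one, Finset.sum_neg_distrib, neg_neg, dotProduct,
    Pi.star_apply, star_trivial, mulVec]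
  exact Finset.sum_comm

theorem stmt_4_general (n N : ℕ) (p : Fin (N + 1) → ℕ)
    (hp : StrictMono p) :
    ∃ Q : Polynomial ℝ, Q.degree = (N : WithBot ℕ) ∧
      Q.coeff N = (tilde (Matrix.of fun i j : Fin (N + 1) =>
        (1 : ℝ) / ((p i : ℝ) + (p j : ℝ) + 1))).det ∧
      ∀ ξ : EuclideanSpace ℝ (Fin n),
        (tilde (‖ξ‖ ^ 2 • (Matrix.of fun i j : Fin (N + 1) =>
            (1 : ℝ) / ((p i : ℝ) + (p j : ℝ) + 1))
          + Matrix.of fun i j : Fin (N + 1) =>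
            ((p i : ℝ) * (p j : ℝ)) / ((p i : ℝ) + (p j : ℝ) - 1))).det
        = Q.eval (‖ξ‖ ^ 2) := by
  set A₀ : Matrix (Fin (N + 1)) (Fin (N + 1)) ℝ := of fun i j => 1 / ((p i : ℝ) + p j + 1)
  set A₁ : Matrix (Fin (N + 1)) (Fin (N + 1)) ℝ := of fun i j => (p i : ℝ) * p j / (p i + p j - 1)
  have hlead : (tildeDetPoly A₀ A₁).coeff N ≠ 0 := by
    rw [coeff_tildeDetPoly]
    exact (det_tilde_pos (posDef_one_div_add_add_one hp.injective)).ne'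
  refine ⟨tildeDetPoly A₀ A₁, ?_, coeff_tildeDetPoly A₀ A₁,
    fun ξ => (eval_tildeDetPoly A₀ A₁ _).symm⟩
  exact degree_eq_of_le_of_coeff_ne_zero
    (natDegree_le_iff_degree_le.mp (natDegree_tildeDetPoly_le A₀ A₁)) hlead

/-- For `0 = p₀ < p₁ < ⋯ < p_N` and `𝒜(ξ) = |ξ|² A₀ + A₁`, there is a real polynomial `Q` of
degree exactly `N` with leading coefficient `det Ã₀` such that
`det 𝒜̃(ξ) = Q(|ξ|²)` for all `ξ ∈ ℝⁿ`. -/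
theorem stmt_4 (n N : ℕ) (hn : 1 ≤ n) (p : Fin (N + 1) → ℕ)
    (hp0 : p 0 = 0) (hp : StrictMono p) :
    ∃ Q : Polynomial ℝ, Q.degree = (N : WithBot ℕ) ∧
      Q.coeff N = (tilde (Matrix.of fun i j : Fin (N + 1) =>
        (1 : ℝ) / ((p i : ℝ) + (p j : ℝ) + 1))).det ∧
      ∀ ξ : EuclideanSpace ℝ (Fin n),
        (tilde (‖ξ‖ ^ 2 • (Matrix.of fun i j : Fin (N + 1) =>
            (1 : ℝ) / ((p i : ℝ) + (p j : ℝ) + 1))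
          + Matrix.of fun i j : Fin (N + 1) =>
            ((p i : ℝ) * (p j : ℝ)) / ((p i : ℝ) + (p j : ℝ) - 1))).det
        = Q.eval (‖ξ‖ ^ 2) :=
  stmt_4_general n N p hp
end

section
/- Let N, N* ≥ 0 be integers, let 0 = p₀ < p₁ < ⋯ < p_{N*} be integers, and let ρ₁, ρ₂, g, h₁, h₂ be real numbers. Then for every ξ ∈ ℝⁿ and every ω ∈ ℂ, the determinant of the complex (N+N*+3)×(N+N*+3) block matrix M = [[(ρ₂−ρ₁)g, iρ₁ω 𝟙ᵀ_{N+1}, −iρ₂ω 𝟙ᵀ_{N*+1}],[−i h₁ ω 𝟙_{N+1}, 𝒜₁(h₁ξ), O],[i h₂ ω 𝟙_{N*+1}, O, 𝒜₂(h₂ξ)]] satisfies det M = (ρ₂−ρ₁) g det 𝒜₁(h₁ξ) det 𝒜₂(h₂ξ) − ω² ( ρ₁ h₁ det 𝒜̃₁(h₁ξ) det 𝒜₂(h₂ξ) + ρ₂ h₂ det 𝒜̃₂(h₂ξ) det 𝒜₁(h₁ξ) ). -/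
/-- The matrix `A_{1,0} = (1/(2(i+j)+1))`. -/
noncomputable def matA10 (N : ℕ) : Matrix (Fin (N + 1)) (Fin (N + 1)) ℝ :=
  Matrix.of fun i j => (1 : ℝ) / (2 * ((i : ℕ) + (j : ℕ)) + 1)

/-- The matrix `A_{1,1} = (4ij/(2(i+j)−1))`. -/
noncomputable def matA11 (N : ℕ) : Matrix (Fin (N + 1)) (Fin (N + 1)) ℝ :=
  Matrix.of fun i j => (4 * (i : ℕ) * (j : ℕ) : ℝ) / ((2 * ((i : ℕ) + (j : ℕ)) : ℝ) - 1)

/-- The matrix `A_{2,0} = (1/(pᵢ+pⱼ+1))`. -/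
noncomputable def matA20 (M : ℕ) (p : Fin (M + 1) → ℕ) :
    Matrix (Fin (M + 1)) (Fin (M + 1)) ℝ :=
  Matrix.of fun i j => (1 : ℝ) / ((p i : ℝ) + (p j : ℝ) + 1)

/-- The matrix `A_{2,1} = (pᵢpⱼ/(pᵢ+pⱼ−1))` (with the convention `0/0 = 0`). -/
noncomputable def matA21 (M : ℕ) (p : Fin (M + 1) → ℕ) :
    Matrix (Fin (M + 1)) (Fin (M + 1)) ℝ :=
  Matrix.of fun i j => ((p i : ℝ) * (p j : ℝ)) / ((p i : ℝ) + (p j : ℝ) - 1)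

/-! Expanding the determinant linearly in its first column splits it into the corner term
`(ρ₂ - ρ₁) g det 𝒜₁ det 𝒜₂` and one term per layer. After reordering the indices each layer
term is block triangular, so it factors as the determinant of that layer's bordered matrix
times the determinant of the other layer. A border with constant entries `t`, `s` gives
`-t s det Ã`, and in both layers `t s = ρ_k h_k ω²` because `i² = -1`. -/

namespace Matrix

variable {R : Type*} [CommRing R] {α β : Type*} [Fintype α] [DecidableEq α]
  [Fintype β] [DecidableEq β]

theorem det_bordered_fromBlocks_diag (a : R) (u₁ v₁ : α → R) (u₂ v₂ : β → R)
    (B : Matrix α α R) (C : Matrix β β R) :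
    (fromBlocks (of fun _ _ : Fin 1 => a) (of fun _ k => Sum.elim u₁ u₂ k)
        (of fun k _ => Sum.elim v₁ v₂ k) (fromBlocks B 0 0 C)).det
      = a * B.det * C.det
        + (fromBlocks (0 : Matrix (Fin 1) (Fin 1) R) (of fun _ k => u₁ k)
            (of fun k _ => v₁ k) B).det * C.det
        + (fromBlocks (0 : Matrix (Fin 1) (Fin 1) R) (of fun _ k => u₂ k)
            (of fun k _ => v₂ k) C).det * B.det := by
  set M := fromBlocks (of fun _ _ : Fin 1 => a) (of fun _ k => Sum.elim u₁ u₂ k)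
    (of fun k _ => Sum.elim v₁ v₂ k) (fromBlocks B 0 0 C)
  let corner : Fin 1 ⊕ (α ⊕ β) → R := Sum.elim (fun _ => a) 0
  let left : Fin 1 ⊕ (α ⊕ β) → R := Sum.elim 0 (Sum.elim v₁ 0)
  let right : Fin 1 ⊕ (α ⊕ β) → R := Sum.elim 0 (Sum.elim 0 v₂)
  have hcol : M = M.updateCol (Sum.inl 0) (corner + (left + right)) := by
    ext (i | i | i) (j | j) <;> simp [M, corner, left, right, Fin.fin_one_eq_zero]
  have hcorner : (M.updateCol (Sum.inl 0) corner).det = a * B.det * C.det := by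
    have : M.updateCol (Sum.inl 0) corner
        = fromBlocks (of fun _ _ : Fin 1 => a) (of fun _ k => Sum.elim u₁ u₂ k) 0
            (fromBlocks B 0 0 C) := by
      ext (i | i | i) (j | j | j) <;> simp [M, corner, Fin.fin_one_eq_zero]
    rw [this, det_fromBlocks_zero₂₁, det_fromBlocks_zero₂₁, det_unique, of_apply, mul_assoc]
  have hleft : (M.updateCol (Sum.inl 0) left).det
      = (fromBlocks (0 : Matrix (Fin 1) (Fin 1) R) (of fun _ k => u₁ k)
          (of fun k _ => v₁ k) B).det * C.det := by
    rw [← det_submatrix_equiv_self (Equiv.sumAssoc (Fin 1) α β)]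
    have : (M.updateCol (Sum.inl 0) left).submatrix
        (Equiv.sumAssoc (Fin 1) α β) (Equiv.sumAssoc (Fin 1) α β)
        = fromBlocks (fromBlocks 0 (of fun _ k => u₁ k) (of fun k _ => v₁ k) B)
            (of fun i j => Sum.elim (fun _ => u₂ j) (fun _ => 0) i) 0 C := by
      ext ((i | i) | i) ((j | j) | j) <;> simp [M, left, Fin.fin_one_eq_zero]
    rw [this, det_fromBlocks_zero₂₁]
  have hright : (M.updateCol (Sum.inl 0) right).det
      = (fromBlocks (0 : Matrix (Fin 1) (Fin 1) R) (of fun _ k => u₂ k)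
          (of fun k _ => v₂ k) C).det * B.det := by
    let e : α ⊕ (Fin 1 ⊕ β) ≃ Fin 1 ⊕ (α ⊕ β) :=
      ((Equiv.sumAssoc α (Fin 1) β).symm.trans
        ((Equiv.sumComm α (Fin 1)).sumCongr (Equiv.refl β))).trans (Equiv.sumAssoc (Fin 1) α β)
    rw [← det_submatrix_equiv_self e]
    have : (M.updateCol (Sum.inl 0) right).submatrix e e
        = fromBlocks B 0 (of fun i j => Sum.elim (fun _ => u₁ j) (fun _ => 0) i)
            (fromBlocks 0 (of fun _ k => u₂ k) (of fun k _ => v₂ k) C) := by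
      ext (i | i | i) (j | j | j) <;> simp [M, e, right, Fin.fin_one_eq_zero]
    rw [this, det_fromBlocks_zero₁₂, mul_comm]
  rw [hcol, det_updateCol_add, det_updateCol_add, hcorner, hleft, hright, add_assoc]

theorem det_fromBlocks_zero_const_const (A : Matrix α α R) (t s : R) :
    (fromBlocks (0 : Matrix (Fin 1) (Fin 1) R) (of fun _ _ => t) (of fun _ _ => s) A).det
      = -(t * s) * (fromBlocks (0 : Matrix (Fin 1) (Fin 1) R) (of fun _ _ => 1)
          (of fun _ _ => -1) A).det := by
  have hfactor : fromBlocks (0 : Matrix (Fin 1) (Fin 1) R) (of fun _ _ => t) (of fun _ _ => s) A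
      = diagonal (Sum.elim (fun _ => t) 1) *
          fromBlocks 0 (of fun _ _ => 1) (of fun _ _ => -1) A *
        diagonal (Sum.elim (fun _ => -s) 1) := by
    ext (i | i) (j | j) <;> simp [diagonal_mul, mul_diagonal]
  rw [hfactor, det_mul, det_mul, det_diagonal, det_diagonal]
  simp [Fintype.prod_sum_type]
  ring

end Matrix

section Dispersion

open Matrix Complex

theorem Complex.ofReal_det {m : Type*} [Fintype m] [DecidableEq m] (A : Matrix m m ℝ) :
    ((A.det : ℝ) : ℂ) = (A.map ofReal).det :=
  RingHom.map_det ofRealHom A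

theorem ofReal_det_tilde {m : ℕ} (A : Matrix (Fin m) (Fin m) ℝ) :
    (((tilde A).det : ℝ) : ℂ)
      = (fromBlocks (0 : Matrix (Fin 1) (Fin 1) ℂ) (of fun _ _ => 1) (of fun _ _ => -1)
          (A.map ofReal)).det := by
  rw [ofReal_det, tilde, fromBlocks_map]
  congr 1
  ext (i | i) (j | j) <;> simp

theorem det_dispersionMatrix {m₁ m₂ : ℕ} (A₁ : Matrix (Fin m₁) (Fin m₁) ℝ)
    (A₂ : Matrix (Fin m₂) (Fin m₂) ℝ) (ρ₁ ρ₂ g h₁ h₂ : ℝ) (ω : ℂ) :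
    (fromBlocks (of fun _ _ : Fin 1 => (((ρ₂ - ρ₁) * g : ℝ) : ℂ))
        (of fun _ k => Sum.elim (fun _ => I * ρ₁ * ω) (fun _ => -(I * ρ₂ * ω)) k)
        (of fun k _ => Sum.elim (fun _ => -(I * h₁ * ω)) (fun _ => I * h₂ * ω) k)
        (fromBlocks (A₁.map ofReal) 0 0 (A₂.map ofReal))).det
      = (((ρ₂ - ρ₁) * g * A₁.det * A₂.det : ℝ) : ℂ)
        - ω ^ 2 * ((ρ₁ * h₁ * (tilde A₁).det * A₂.det
          + ρ₂ * h₂ * (tilde A₂).det * A₁.det : ℝ) : ℂ) := by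
  rw [det_bordered_fromBlocks_diag, det_fromBlocks_zero_const_const,
    ← ofReal_det_tilde, det_fromBlocks_zero_const_const, ← ofReal_det_tilde, ← ofReal_det,
    ← ofReal_det]
  push_cast
  linear_combination (ρ₁ * h₁ * ω ^ 2 * ((tilde A₁).det : ℂ) * (A₂.det : ℂ)
    + ρ₂ * h₂ * ω ^ 2 * ((tilde A₂).det : ℂ) * (A₁.det : ℂ)) * I_sq

end Dispersion

theorem stmt_7_general (n N Nstar : ℕ) (p : Fin (Nstar + 1) → ℕ)
    (ρ₁ ρ₂ g h₁ h₂ : ℝ) (ξ : EuclideanSpace ℝ (Fin n)) (ω : ℂ) :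
    (Matrix.fromBlocks
        (Matrix.of fun _ _ : Fin 1 => (((ρ₂ - ρ₁) * g : ℝ) : ℂ))
        (Matrix.of fun (_ : Fin 1) (k : Fin (N + 1) ⊕ Fin (Nstar + 1)) =>
          Sum.elim (fun _ => Complex.I * (ρ₁ : ℂ) * ω)
            (fun _ => -(Complex.I * (ρ₂ : ℂ) * ω)) k)
        (Matrix.of fun (k : Fin (N + 1) ⊕ Fin (Nstar + 1)) (_ : Fin 1) =>
          Sum.elim (fun _ => -(Complex.I * (h₁ : ℂ) * ω))
            (fun _ => Complex.I * (h₂ : ℂ) * ω) k)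
        (Matrix.fromBlocks
          ((‖(h₁ • ξ : EuclideanSpace ℝ (Fin n))‖ ^ 2 • matA10 N + matA11 N).map
            Complex.ofReal)
          0 0
          ((‖(h₂ • ξ : EuclideanSpace ℝ (Fin n))‖ ^ 2 • matA20 Nstar p
              + matA21 Nstar p).map Complex.ofReal))).det
    = (((ρ₂ - ρ₁) * g
          * (‖(h₁ • ξ : EuclideanSpace ℝ (Fin n))‖ ^ 2 • matA10 N + matA11 N).det
          * (‖(h₂ • ξ : EuclideanSpace ℝ (Fin n))‖ ^ 2 • matA20 Nstar p
              + matA21 Nstar p).det : ℝ) : ℂ)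
      - ω ^ 2 * ((ρ₁ * h₁
            * (tilde (‖(h₁ • ξ : EuclideanSpace ℝ (Fin n))‖ ^ 2 • matA10 N + matA11 N)).det
            * (‖(h₂ • ξ : EuclideanSpace ℝ (Fin n))‖ ^ 2 • matA20 Nstar p
                + matA21 Nstar p).det
          + ρ₂ * h₂
            * (tilde (‖(h₂ • ξ : EuclideanSpace ℝ (Fin n))‖ ^ 2 • matA20 Nstar p
                + matA21 Nstar p)).det
            * (‖(h₁ • ξ : EuclideanSpace ℝ (Fin n))‖ ^ 2 • matA10 N + matA11 N).det
          : ℝ) : ℂ) :=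
  det_dispersionMatrix _ _ ρ₁ ρ₂ g h₁ h₂ ω

/-- Expansion of the determinant giving the linear dispersion relation of the Kakinuma model
linearized around the rest state over a flat bottom. -/
theorem stmt_7 (n N Nstar : ℕ) (hn : 1 ≤ n) (p : Fin (Nstar + 1) → ℕ)
    (hp0 : p 0 = 0) (hp : StrictMono p)
    (ρ₁ ρ₂ g h₁ h₂ : ℝ) (ξ : EuclideanSpace ℝ (Fin n)) (ω : ℂ) :
    (Matrix.fromBlocks
        (Matrix.of fun _ _ : Fin 1 => (((ρ₂ - ρ₁) * g : ℝ) : ℂ))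
        (Matrix.of fun (_ : Fin 1) (k : Fin (N + 1) ⊕ Fin (Nstar + 1)) =>
          Sum.elim (fun _ => Complex.I * (ρ₁ : ℂ) * ω)
            (fun _ => -(Complex.I * (ρ₂ : ℂ) * ω)) k)
        (Matrix.of fun (k : Fin (N + 1) ⊕ Fin (Nstar + 1)) (_ : Fin 1) =>
          Sum.elim (fun _ => -(Complex.I * (h₁ : ℂ) * ω))
            (fun _ => Complex.I * (h₂ : ℂ) * ω) k)
        (Matrix.fromBlocks
          ((‖(h₁ • ξ : EuclideanSpace ℝ (Fin n))‖ ^ 2 • matA10 N + matA11 N).map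
            Complex.ofReal)
          0 0
          ((‖(h₂ • ξ : EuclideanSpace ℝ (Fin n))‖ ^ 2 • matA20 Nstar p
              + matA21 Nstar p).map Complex.ofReal))).det
    = (((ρ₂ - ρ₁) * g
          * (‖(h₁ • ξ : EuclideanSpace ℝ (Fin n))‖ ^ 2 • matA10 N + matA11 N).det
          * (‖(h₂ • ξ : EuclideanSpace ℝ (Fin n))‖ ^ 2 • matA20 Nstar p
              + matA21 Nstar p).det : ℝ) : ℂ)
      - ω ^ 2 * ((ρ₁ * h₁
            * (tilde (‖(h₁ • ξ : EuclideanSpace ℝ (Fin n))‖ ^ 2 • matA10 N + matA11 N)).det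
            * (‖(h₂ • ξ : EuclideanSpace ℝ (Fin n))‖ ^ 2 • matA20 Nstar p
                + matA21 Nstar p).det
          + ρ₂ * h₂
            * (tilde (‖(h₂ • ξ : EuclideanSpace ℝ (Fin n))‖ ^ 2 • matA20 Nstar p
                + matA21 Nstar p)).det
            * (‖(h₁ • ξ : EuclideanSpace ℝ (Fin n))‖ ^ 2 • matA10 N + matA11 N).det
          : ℝ) : ℂ) :=
  stmt_7_general n N Nstar p ρ₁ ρ₂ g h₁ h₂ ξ ω
end

section
/- Let N, N* ≥ 0 be integers, let 0 = p₀ < p₁ < ⋯ < p_{N*} be integers, let a, ρ₁, ρ₂, H₁, H₂ be real numbers, let u₁, u₂ ∈ ℝⁿ and ξ ∈ ℝⁿ, and let ω ∈ ℂ. Then the determinant of the complex (N+N*+3)×(N+N*+3) block matrix [[a, iρ₁(ω−u₁·ξ) 𝟙ᵀ_{N+1}, −iρ₂(ω−u₂·ξ) 𝟙ᵀ_{N*+1}],[−i H₁ (ω−u₁·ξ) 𝟙_{N+1}, (H₁|ξ|)² A_{1,0}, O],[i H₂ (ω−u₂·ξ) 𝟙_{N*+1}, O, (H₂|ξ|)²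 A_{2,0}]] equals H₁^{2N+1} H₂^{2N*+1} |ξ|^{2(N+N*+1)} · { a H₁ H₂ |ξ|² det A_{1,0} det A_{2,0} − ρ₁ H₂ (ω−u₁·ξ)² det Ã_{1,0} det A_{2,0} − ρ₂ H₁ (ω−u₂·ξ)² det Ã_{2,0} det A_{1,0} }. -/
open scoped RealInnerProductSpace

/-!
Splitting the first row into `(a, 0, 0) + (0, b₁𝟙ᵀ, 0) + (0, 0, b₂𝟙ᵀ)`, each of the three
determinants is block triangular after reordering the indices, because the off-diagonal blocks
vanish: this gives `a det A det B` plus one bordered determinant per diagonal block. A border of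
constants `b`, `c` is scaled out to give `-b c det Ã`, and `det Ã(sA) = s^m det Ã(A)` for `A` of
size `m + 1`, so the factors `(Hₖ|ξ|)²` collect into the prefactor while `i² = -1` fixes the signs.
-/

namespace Matrix

variable {R S : Type*} [CommRing R] [CommRing S] {ι κ₁ κ₂ : Type*}

def onesBorder (A : Matrix ι ι R) : Matrix (Fin 1 ⊕ ι) (Fin 1 ⊕ ι) R :=
  fromBlocks 0 (of fun _ _ => 1) (of fun _ _ => -1) A

theorem onesBorder_map (f : R →+* S) (A : Matrix ι ι R) :
    (onesBorder A).map f = onesBorder (A.map f) := by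
  simp only [onesBorder, fromBlocks_map, Matrix.map_zero _ f.map_zero]
  congr <;> ext <;> simp

variable [Fintype ι] [DecidableEq ι] [Fintype κ₁] [DecidableEq κ₁] [Fintype κ₂] [DecidableEq κ₂]

theorem det_fromBlocks_zero_const (b c : R) (A : Matrix ι ι R) :
    det (fromBlocks (0 : Matrix (Fin 1) (Fin 1) R) (of fun _ _ => b) (of fun _ _ => c) A)
      = -(b * c) * det (onesBorder A) := by
  have hfactor : fromBlocks (0 : Matrix (Fin 1) (Fin 1) R) (of fun _ _ => b) (of fun _ _ => c) A
      = fromBlocks (b • 1) 0 0 1 * onesBorder A * fromBlocks ((-c) • 1) 0 0 1 := by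
    rw [onesBorder, fromBlocks_multiply, fromBlocks_multiply]
    congr 1 <;> ext <;> simp
  rw [hfactor, det_mul, det_mul, det_fromBlocks_zero₁₂, det_fromBlocks_zero₁₂, det_smul,
    det_smul, det_one, det_one, Fintype.card_fin, pow_one, pow_one]
  ring

theorem mul_det_onesBorder_smul (s : R) (A : Matrix ι ι R) :
    s * det (onesBorder (s • A)) = s ^ Fintype.card ι * det (onesBorder A) := by
  have hfactor : fromBlocks (s • 1 : Matrix (Fin 1) (Fin 1) R) 0 0 1 * onesBorder (s • A)
      = onesBorder A * fromBlocks 1 0 0 (s • 1) := by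
    rw [onesBorder, onesBorder, fromBlocks_multiply, fromBlocks_multiply]
    congr 1 <;> ext <;> simp
  have hdet := congrArg det hfactor
  rw [det_mul, det_mul, det_fromBlocks_zero₁₂, det_fromBlocks_zero₁₂, det_smul, det_smul,
    det_one, det_one, Fintype.card_fin, pow_one] at hdet
  linear_combination hdet

open Polynomial in
theorem det_onesBorder_smul [Nonempty ι] (s : R) (A : Matrix ι ι R) :
    det (onesBorder (s • A)) = s ^ (Fintype.card ι - 1) * det (onesBorder A) := by
  -- `mul_det_onesBorder_smul` can be divided by `X`, a non-zero-divisor of `R[X]`;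
  -- then specialise `X ↦ s`.
  have hX : det (onesBorder ((X : R[X]) • A.map C))
      = X ^ (Fintype.card ι - 1) * det (onesBorder (A.map C)) := by
    refine isRegular_X.left ?_
    dsimp only
    rw [mul_det_onesBorder_smul, ← mul_assoc, ← pow_succ',
      Nat.sub_add_cancel Fintype.card_pos]
  have hmap : ∀ t : R[X], (t • A.map C).map (evalRingHom s) = t.eval s • A := by
    intro t; ext; simp
  have hC : (A.map C).map (evalRingHom s) = A := by ext; simp
  have h := congrArg (evalRingHom s) hX
  rw [map_mul, map_pow, RingHom.map_det, RingHom.map_det, RingHom.mapMatrix_apply,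
    RingHom.mapMatrix_apply, onesBorder_map, onesBorder_map, hmap, hC] at h
  rwa [coe_evalRingHom, eval_X] at h

theorem det_arrowhead (a : R) (u₁ : κ₁ → R) (u₂ : κ₂ → R) (v₁ : κ₁ → R) (v₂ : κ₂ → R)
    (A : Matrix κ₁ κ₁ R) (B : Matrix κ₂ κ₂ R) :
    det (fromBlocks (of fun _ _ : Fin 1 => a) (of fun _ k => Sum.elim u₁ u₂ k)
        (of fun k _ => Sum.elim v₁ v₂ k) (fromBlocks A 0 0 B))
      = a * det A * det B
        + det (fromBlocks (0 : Matrix (Fin 1) (Fin 1) R) (of fun _ j => u₁ j)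
            (of fun i _ => v₁ i) A) * det B
        + det (fromBlocks (0 : Matrix (Fin 1) (Fin 1) R) (of fun _ j => u₂ j)
            (of fun i _ => v₂ i) B) * det A := by
  set M := fromBlocks (of fun _ _ : Fin 1 => a) (of fun _ k => Sum.elim u₁ u₂ k)
    (of fun k _ => Sum.elim v₁ v₂ k) (fromBlocks A 0 0 B)
  set r₀ := Sum.elim (fun _ => a) (0 : κ₁ ⊕ κ₂ → R)
  set r₁ := Sum.elim (0 : Fin 1 → R) (Sum.elim u₁ (0 : κ₂ → R))
  set r₂ := Sum.elim (0 : Fin 1 → R) (Sum.elim (0 : κ₁ → R) u₂)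
  have hrow : M (Sum.inl 0) = r₀ + r₁ + r₂ := by
    ext (j | j | j) <;> simp [M, r₀, r₁, r₂]
  have h₀ : det (M.updateRow (Sum.inl 0) r₀) = a * det A * det B := by
    have hblock : M.updateRow (Sum.inl 0) r₀
        = fromBlocks (of fun _ _ => a) 0 (of fun k _ => Sum.elim v₁ v₂ k) (fromBlocks A 0 0 B) := by
      ext (i | i | i) (j | j | j) <;> simp [M, r₀, updateRow_apply, Fin.fin_one_eq_zero]
    rw [hblock, det_fromBlocks_zero₁₂, det_fromBlocks_zero₁₂, det_unique, mul_assoc]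
    rfl
  have h₁ : det (M.updateRow (Sum.inl 0) r₁)
      = det (fromBlocks (0 : Matrix (Fin 1) (Fin 1) R) (of fun _ j => u₁ j)
          (of fun i _ => v₁ i) A) * det B := by
    rw [← det_submatrix_equiv_self (Equiv.sumAssoc _ _ _),
      ← det_fromBlocks_zero₁₂ _ (of fun i j => Sum.elim (fun _ => v₂ i) 0 j)]
    congr 1
    ext ((i | i) | i) ((j | j) | j) <;> simp [M, r₁, updateRow_apply, Fin.fin_one_eq_zero]
  have h₂ : det (M.updateRow (Sum.inl 0) r₂)
      = det (fromBlocks (0 : Matrix (Fin 1) (Fin 1) R) (of fun _ j => u₂ j)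
          (of fun i _ => v₂ i) B) * det A := by
    let e : (Fin 1 ⊕ κ₂) ⊕ κ₁ ≃ Fin 1 ⊕ κ₁ ⊕ κ₂ :=
      (Equiv.sumAssoc _ _ _).trans ((Equiv.refl _).sumCongr (Equiv.sumComm _ _))
    rw [← det_submatrix_equiv_self e,
      ← det_fromBlocks_zero₁₂ _ (of fun i j => Sum.elim (fun _ => v₁ i) 0 j)]
    congr 1
    ext ((i | i) | i) ((j | j) | j) <;> simp [M, r₂, e, updateRow_apply, Fin.fin_one_eq_zero]
  rw [← updateRow_eq_self M (Sum.inl 0), hrow, det_updateRow_add, det_updateRow_add, h₀, h₁, h₂]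

end Matrix

open Matrix

theorem det_map_ofReal {ι : Type*} [Fintype ι] [DecidableEq ι] (A : Matrix ι ι ℝ) :
    det (A.map Complex.ofReal) = ((det A : ℝ) : ℂ) :=
  (Complex.ofRealHom.map_det A).symm

theorem det_onesBorder_map_ofReal {m : ℕ} (A : Matrix (Fin m) (Fin m) ℝ) :
    det (onesBorder (A.map Complex.ofReal)) = ((det (tilde A) : ℝ) : ℂ) :=
  (congrArg det (onesBorder_map Complex.ofRealHom A)).symm.trans (det_map_ofReal (tilde A))

theorem stmt_9_general (n N Nstar : ℕ) (p : Fin (Nstar + 1) → ℕ)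
    (a ρ₁ ρ₂ H₁ H₂ : ℝ) (u₁ u₂ ξ : EuclideanSpace ℝ (Fin n)) (ω : ℂ) :
    (Matrix.fromBlocks
        (Matrix.of fun _ _ : Fin 1 => ((a : ℝ) : ℂ))
        (Matrix.of fun (_ : Fin 1) (k : Fin (N + 1) ⊕ Fin (Nstar + 1)) =>
          Sum.elim
            (fun _ => Complex.I * (ρ₁ : ℂ) * (ω - ((⟪u₁, ξ⟫ : ℝ) : ℂ)))
            (fun _ => -(Complex.I * (ρ₂ : ℂ) * (ω - ((⟪u₂, ξ⟫ : ℝ) : ℂ)))) k)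
        (Matrix.of fun (k : Fin (N + 1) ⊕ Fin (Nstar + 1)) (_ : Fin 1) =>
          Sum.elim
            (fun _ => -(Complex.I * (H₁ : ℂ) * (ω - ((⟪u₁, ξ⟫ : ℝ) : ℂ))))
            (fun _ => Complex.I * (H₂ : ℂ) * (ω - ((⟪u₂, ξ⟫ : ℝ) : ℂ))) k)
        (Matrix.fromBlocks
          ((((H₁ * ‖ξ‖) ^ 2 • matA10 N).map Complex.ofReal)) 0 0
          (((H₂ * ‖ξ‖) ^ 2 • matA20 Nstar p).map Complex.ofReal))).det
    = ((H₁ ^ (2 * N + 1) * H₂ ^ (2 * Nstar + 1) * ‖ξ‖ ^ (2 * (N + Nstar + 1)) : ℝ) : ℂ)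
      * (((a * H₁ * H₂ * ‖ξ‖ ^ 2 * (matA10 N).det * (matA20 Nstar p).det : ℝ) : ℂ)
        - ((ρ₁ * H₂ * (tilde (matA10 N)).det * (matA20 Nstar p).det : ℝ) : ℂ)
            * (ω - ((⟪u₁, ξ⟫ : ℝ) : ℂ)) ^ 2
        - ((ρ₂ * H₁ * (tilde (matA20 Nstar p)).det * (matA10 N).det : ℝ) : ℂ)
            * (ω - ((⟪u₂, ξ⟫ : ℝ) : ℂ)) ^ 2) := by
  rw [det_arrowhead, det_fromBlocks_zero_const, det_fromBlocks_zero_const,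
    map_smul' _ _ _ Complex.ofReal_mul, map_smul' _ _ _ Complex.ofReal_mul,
    det_smul, det_smul, det_onesBorder_smul, det_onesBorder_smul, det_onesBorder_map_ofReal,
    det_onesBorder_map_ofReal, det_map_ofReal, det_map_ofReal]
  simp only [Fintype.card_fin, add_tsub_cancel_right]
  push_cast
  linear_combination (ρ₁ * H₁ * (ω - ((⟪u₁, ξ⟫ : ℝ) : ℂ)) ^ 2 * ((H₁ * ‖ξ‖ : ℂ) ^ 2) ^ N
      * (tilde (matA10 N)).det * ((H₂ * ‖ξ‖ : ℂ) ^ 2) ^ (Nstar + 1) * (matA20 Nstar p).det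
    + ρ₂ * H₂ * (ω - ((⟪u₂, ξ⟫ : ℝ) : ℂ)) ^ 2 * ((H₂ * ‖ξ‖ : ℂ) ^ 2) ^ Nstar
      * (tilde (matA20 Nstar p)).det * ((H₁ * ‖ξ‖ : ℂ) ^ 2) ^ (N + 1) * (matA10 N).det)
    * Complex.I_sq

/-- Expansion of the determinant giving the frozen-coefficient dispersion relation of the
Kakinuma model linearized around an arbitrary flow. -/
theorem stmt_9 (n N Nstar : ℕ) (hn : 1 ≤ n) (p : Fin (Nstar + 1) → ℕ)
    (hp0 : p 0 = 0) (hp : StrictMono p)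
    (a ρ₁ ρ₂ H₁ H₂ : ℝ) (u₁ u₂ ξ : EuclideanSpace ℝ (Fin n)) (ω : ℂ) :
    (Matrix.fromBlocks
        (Matrix.of fun _ _ : Fin 1 => ((a : ℝ) : ℂ))
        (Matrix.of fun (_ : Fin 1) (k : Fin (N + 1) ⊕ Fin (Nstar + 1)) =>
          Sum.elim
            (fun _ => Complex.I * (ρ₁ : ℂ) * (ω - ((⟪u₁, ξ⟫ : ℝ) : ℂ)))
            (fun _ => -(Complex.I * (ρ₂ : ℂ) * (ω - ((⟪u₂, ξ⟫ : ℝ) : ℂ)))) k)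
        (Matrix.of fun (k : Fin (N + 1) ⊕ Fin (Nstar + 1)) (_ : Fin 1) =>
          Sum.elim
            (fun _ => -(Complex.I * (H₁ : ℂ) * (ω - ((⟪u₁, ξ⟫ : ℝ) : ℂ))))
            (fun _ => Complex.I * (H₂ : ℂ) * (ω - ((⟪u₂, ξ⟫ : ℝ) : ℂ))) k)
        (Matrix.fromBlocks
          ((((H₁ * ‖ξ‖) ^ 2 • matA10 N).map Complex.ofReal)) 0 0
          (((H₂ * ‖ξ‖) ^ 2 • matA20 Nstar p).map Complex.ofReal))).det
    = ((H₁ ^ (2 * N + 1) * H₂ ^ (2 * Nstar + 1) * ‖ξ‖ ^ (2 * (N + Nstar + 1)) : ℝ) : ℂ)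
      * (((a * H₁ * H₂ * ‖ξ‖ ^ 2 * (matA10 N).det * (matA20 Nstar p).det : ℝ) : ℂ)
        - ((ρ₁ * H₂ * (tilde (matA10 N)).det * (matA20 Nstar p).det : ℝ) : ℂ)
            * (ω - ((⟪u₁, ξ⟫ : ℝ) : ℂ)) ^ 2
        - ((ρ₂ * H₁ * (tilde (matA20 Nstar p)).det * (matA10 N).det : ℝ) : ℂ)
            * (ω - ((⟪u₂, ξ⟫ : ℝ) : ℂ)) ^ 2) :=
  stmt_9_general n N Nstar p a ρ₁ ρ₂ H₁ H₂ u₁ u₂ ξ ω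
end

section
/- Let ρ₁, ρ₂, H₁, H₂, α₁, α₂ be positive real numbers, a ∈ ℝ, and u₁, u₂ ∈ ℝⁿ. Then the following are equivalent: (i) for every ξ ∈ ℝⁿ, every complex root ω of the quadratic polynomial (ρ₁/(H₁α₁)) (ω − u₁·ξ)² + (ρ₂/(H₂α₂)) (ω − u₂·ξ)² − a|ξ|² is real; (ii) a − (ρ₁ρ₂/(ρ₁H₂α₂ + ρ₂H₁α₁)) |u₂ − u₁|² ≥ 0. -/
/-!
Writing `A = ρ₁/(H₁α₁)`, `B = ρ₂/(H₂α₂)`, `p = u₁·ξ`, `q = u₂·ξ`, completing the square gives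
`A(ω-p)² + B(ω-q)² - a|ξ|² = (A+B)((ω-m)² - D/(A+B))` with `m = (Ap+Bq)/(A+B)` real and
`D = a|ξ|² - AB/(A+B)(q-p)²`, so all roots are real iff `D ≥ 0`. Since `q - p = (u₂-u₁)·ξ`,
Cauchy–Schwarz (with equality at `ξ = u₂ - u₁`) turns `D ≥ 0` for all `ξ` into
`AB/(A+B)|u₂-u₁|² ≤ a`, and `AB/(A+B) = ρ₁ρ₂/(ρ₁H₂α₂ + ρ₂H₁α₁)`.
-/

open scoped RealInnerProductSpace

namespace Complex

theorem forall_sq_eq_ofReal_im_eq_zero_iff (t : ℝ) :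
    (∀ z : ℂ, z ^ 2 = t → z.im = 0) ↔ 0 ≤ t := by
  constructor
  · intro h
    by_contra! ht
    have hsq : (I * (√(-t) : ℝ)) ^ 2 = t := by
      rw [mul_pow, I_sq, ← ofReal_pow, Real.sq_sqrt (by linarith)]
      push_cast
      ring
    have him : √(-t) = 0 := by simpa using h _ hsq
    exact (Real.sqrt_pos.2 (neg_pos.2 ht)).ne' him
  · intro ht z hz
    have hre : z.re ^ 2 - z.im ^ 2 = t := by
      simpa [sq, mul_re] using congrArg re hz
    have him : z.re * z.im = 0 := by
      have := congrArg im hz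
      simp only [sq, mul_im, ofReal_im] at this
      linarith
    rcases mul_eq_zero.1 him with h | h
    · nlinarith
    · exact h

end Complex

theorem mul_sub_sq_add_mul_sub_sq_sub_eq_complete_square {A B : ℝ} (hAB : A + B ≠ 0)
    (p q r : ℝ) (ω : ℂ) :
    (A : ℂ) * (ω - p) ^ 2 + (B : ℂ) * (ω - q) ^ 2 - (r : ℂ)
      = ((A + B : ℝ) : ℂ) * ((ω - ((A * p + B * q) / (A + B) : ℝ)) ^ 2
          - ((r - A * B / (A + B) * (q - p) ^ 2) / (A + B) : ℝ)) := by
  have hAB' : (A : ℂ) + B ≠ 0 := by exact_mod_cast hAB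
  push_cast
  field_simp
  ring

theorem quadratic_roots_real_iff_s10 {A B : ℝ} (hA : 0 < A) (hB : 0 < B) (p q r : ℝ) :
    (∀ ω : ℂ, (A : ℂ) * (ω - p) ^ 2 + (B : ℂ) * (ω - q) ^ 2 - (r : ℂ) = 0 → ω.im = 0)
      ↔ A * B / (A + B) * (q - p) ^ 2 ≤ r := by
  have hAB : 0 < A + B := add_pos hA hB
  set m : ℝ := (A * p + B * q) / (A + B)
  set D : ℝ := r - A * B / (A + B) * (q - p) ^ 2
  have hroot (ω : ℂ) :
      (A : ℂ) * (ω - p) ^ 2 + (B : ℂ) * (ω - q) ^ 2 - (r : ℂ) = 0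
        ↔ (ω - m) ^ 2 = ((D / (A + B) : ℝ) : ℂ) := by
    rw [mul_sub_sq_add_mul_sub_sq_sub_eq_complete_square hAB.ne', mul_eq_zero, sub_eq_zero,
      or_iff_right (by exact_mod_cast hAB.ne')]
  have hD : 0 ≤ D / (A + B) ↔ 0 ≤ D := by rw [le_div_iff₀ hAB, zero_mul]
  rw [← sub_nonneg, show r - A * B / (A + B) * (q - p) ^ 2 = D from rfl, ← hD,
    ← Complex.forall_sq_eq_ofReal_im_eq_zero_iff]
  refine ⟨fun h z hz => ?_, fun h ω hω => ?_⟩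
  · simpa using h (z + m) ((hroot _).2 (by simpa using hz))
  · simpa using h (ω - m) ((hroot ω).1 hω)

theorem forall_mul_inner_sq_le_iff {E : Type*} [NormedAddCommGroup E] [InnerProductSpace ℝ E]
    [Nontrivial E] {c : ℝ} (hc : 0 ≤ c) (v : E) (a : ℝ) :
    (∀ ξ : E, c * ⟪v, ξ⟫ ^ 2 ≤ a * ‖ξ‖ ^ 2) ↔ c * ‖v‖ ^ 2 ≤ a := by
  constructor
  · intro h
    rcases eq_or_ne v 0 with rfl | hv
    · obtain ⟨ξ, hξ⟩ := exists_ne (0 : E)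
      simpa [hξ] using h ξ
    · have hv' : 0 < ‖v‖ ^ 2 := by positivity
      have := h v
      rw [real_inner_self_eq_norm_sq, sq, ← mul_assoc] at this
      exact le_of_mul_le_mul_right this hv'
  · intro h ξ
    have hcs : ⟪v, ξ⟫ ^ 2 ≤ ‖v‖ ^ 2 * ‖ξ‖ ^ 2 := by
      rw [← mul_pow, ← sq_abs]
      exact pow_le_pow_left₀ (abs_nonneg _) (abs_real_inner_le_norm v ξ) 2
    calc c * ⟪v, ξ⟫ ^ 2 ≤ c * ‖v‖ ^ 2 * ‖ξ‖ ^ 2 := by rw [mul_assoc]; gcongr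
      _ ≤ a * ‖ξ‖ ^ 2 := by gcongr

/-- The frozen-coefficient linear dispersion relation of the Kakinuma model has only real
roots for every wave vector if and only if the stability condition holds. -/
theorem stmt_10 (n : ℕ) (hn : 1 ≤ n) (ρ₁ ρ₂ H₁ H₂ α₁ α₂ : ℝ)
    (hρ₁ : 0 < ρ₁) (hρ₂ : 0 < ρ₂) (hH₁ : 0 < H₁) (hH₂ : 0 < H₂)
    (hα₁ : 0 < α₁) (hα₂ : 0 < α₂) (a : ℝ) (u₁ u₂ : EuclideanSpace ℝ (Fin n)) :
    (∀ ξ : EuclideanSpace ℝ (Fin n), ∀ ω : ℂ,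
        ((ρ₁ / (H₁ * α₁) : ℝ) : ℂ) * (ω - ((⟪u₁, ξ⟫ : ℝ) : ℂ)) ^ 2
          + ((ρ₂ / (H₂ * α₂) : ℝ) : ℂ) * (ω - ((⟪u₂, ξ⟫ : ℝ) : ℂ)) ^ 2
          - ((a * ‖ξ‖ ^ 2 : ℝ) : ℂ) = 0 → ω.im = 0)
      ↔ 0 ≤ a - ρ₁ * ρ₂ / (ρ₁ * H₂ * α₂ + ρ₂ * H₁ * α₁) * ‖u₂ - u₁‖ ^ 2 := by
  have hA : 0 < ρ₁ / (H₁ * α₁) := by positivity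
  have hB : 0 < ρ₂ / (H₂ * α₂) := by positivity
  have hc : ρ₁ * ρ₂ / (ρ₁ * H₂ * α₂ + ρ₂ * H₁ * α₁)
      = ρ₁ / (H₁ * α₁) * (ρ₂ / (H₂ * α₂)) / (ρ₁ / (H₁ * α₁) + ρ₂ / (H₂ * α₂)) := by
    field_simp
  have : Nonempty (Fin n) := ⟨⟨0, hn⟩⟩
  rw [sub_nonneg, hc, ← forall_mul_inner_sq_le_iff (by positivity)]
  refine forall_congr' fun ξ => ?_
  rw [quadratic_roots_real_iff_s10 hA hB, inner_sub_left]
end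

section
/- Let ρ₁, ρ₂, H₁, H₂, α₁, α₂ be positive real numbers, a ∈ ℝ, and u₁, u₂ ∈ ℝⁿ with v := u₂ − u₁ ≠ 0, and suppose a − (ρ₁ρ₂/(ρ₁H₂α₂ + ρ₂H₁α₁)) |v|² < 0. For t > 0 set ξ_t = t·v. Then for every t > 0 the quadratic polynomial in ω, (ρ₁/(H₁α₁)) (ω − u₁·ξ_t)² + (ρ₂/(H₂α₂)) (ω − u₂·ξ_t)² − a|ξ_t|², has two non-real complex conjugate roots, and the absolute value of their imaginary parts tends to +∞ as t → +∞. -/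
open scoped RealInnerProductSpace ComplexConjugate

/-!
With `cᵢ = ρᵢ/(Hᵢαᵢ)`, completing the square gives
`c₁ (z - x₁)² + c₂ (z - x₂)² - A = (c₁ + c₂) (z - m)² + c₁ c₂ (x₁ - x₂)² / (c₁ + c₂) - A`,
`m` the weighted mean of `x₁, x₂`. Along `ξ = t v` we have `x₂ - x₁ = t ‖v‖²` and
`A = a t² ‖v‖²`, so the constant term is `t² ‖v‖² (c₁ c₂ ‖v‖² / (c₁ + c₂) - a)`; since
`c₁ c₂ / (c₁ + c₂) = ρ₁ρ₂/(ρ₁H₂α₂ + ρ₂H₁α₁)`, it is positive exactly when the stability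
condition fails. The roots are then `t (m ± i s)` with `s > 0` independent of `t`.
-/

lemma weighted_sq_sub_eq_zero_iff {K : Type*} [Field K] {c₁ c₂ x₁ x₂ A m w : K}
    (hc : c₁ + c₂ ≠ 0) (hm : (c₁ + c₂) * m = c₁ * x₁ + c₂ * x₂)
    (hw : (c₁ + c₂) ^ 2 * w ^ 2 = (c₁ + c₂) * A - c₁ * c₂ * (x₁ - x₂) ^ 2) (z : K) :
    c₁ * (z - x₁) ^ 2 + c₂ * (z - x₂) ^ 2 - A = 0 ↔ z = m + w ∨ z = m - w := by
  have hfactor : c₁ * (z - x₁) ^ 2 + c₂ * (z - x₂) ^ 2 - A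
      = (c₁ + c₂) * ((z - (m + w)) * (z - (m - w))) := by
    refine mul_left_cancel₀ hc ?_
    linear_combination (2 * (c₁ + c₂) * z - (c₁ * x₁ + c₂ * x₂) - (c₁ + c₂) * m) * hm + hw
  rw [hfactor, mul_eq_zero, mul_eq_zero, sub_eq_zero, sub_eq_zero]
  simp [hc]

lemma ofReal_weighted_sq_sub_eq_zero_iff {c₁ c₂ x₁ x₂ A m s : ℝ}
    (hc : c₁ + c₂ ≠ 0) (hm : (c₁ + c₂) * m = c₁ * x₁ + c₂ * x₂)
    (hs : (c₁ + c₂) ^ 2 * s ^ 2 = c₁ * c₂ * (x₁ - x₂) ^ 2 - (c₁ + c₂) * A) (z : ℂ) :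
    (c₁ : ℂ) * (z - x₁) ^ 2 + (c₂ : ℂ) * (z - x₂) ^ 2 - (A : ℂ) = 0
      ↔ z = ⟨m, s⟩ ∨ z = conj ⟨m, s⟩ := by
  have hconj : conj (⟨m, s⟩ : ℂ) = m - s * Complex.I := by
    apply Complex.ext <;> simp
  have hsC : ((c₁ : ℂ) + c₂) ^ 2 * (s : ℂ) ^ 2
      = c₁ * c₂ * ((x₁ : ℂ) - x₂) ^ 2 - ((c₁ : ℂ) + c₂) * A := mod_cast hs
  rw [hconj, Complex.mk_eq_add_mul_I]
  refine weighted_sq_sub_eq_zero_iff (mod_cast hc) (mod_cast hm) ?_ z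
  linear_combination -hsC + ((c₁ : ℂ) + c₂) ^ 2 * (s : ℂ) ^ 2 * Complex.I_sq

lemma weighted_sq_sub_eq_zero_iff_along_ray {E : Type*} [NormedAddCommGroup E]
    [InnerProductSpace ℝ E] {c₁ c₂ a m s : ℝ} {u₁ u₂ : E} (hc : c₁ + c₂ ≠ 0)
    (hm : (c₁ + c₂) * m = c₁ * ⟪u₁, u₂ - u₁⟫ + c₂ * ⟪u₂, u₂ - u₁⟫)
    (hs : (c₁ + c₂) ^ 2 * s ^ 2 = ‖u₂ - u₁‖ ^ 2 * (c₁ * c₂ * ‖u₂ - u₁‖ ^ 2 - (c₁ + c₂) * a))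
    (t : ℝ) (z : ℂ) :
    (c₁ : ℂ) * (z - ((⟪u₁, t • (u₂ - u₁)⟫ : ℝ) : ℂ)) ^ 2
        + (c₂ : ℂ) * (z - ((⟪u₂, t • (u₂ - u₁)⟫ : ℝ) : ℂ)) ^ 2
        - ((a * ‖t • (u₂ - u₁)‖ ^ 2 : ℝ) : ℂ) = 0
      ↔ z = ⟨t * m, t * s⟩ ∨ z = conj ⟨t * m, t * s⟩ := by
  have hdiff : ⟪u₁, u₂ - u₁⟫ - ⟪u₂, u₂ - u₁⟫ = -‖u₂ - u₁‖ ^ 2 := by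
    rw [← inner_sub_left, ← neg_sub, inner_neg_left, real_inner_self_eq_norm_sq]
  refine ofReal_weighted_sq_sub_eq_zero_iff hc ?_ ?_ z
  · rw [real_inner_smul_right, real_inner_smul_right]
    linear_combination t * hm
  · rw [real_inner_smul_right, real_inner_smul_right, norm_smul, Real.norm_eq_abs,
      mul_pow |t|, sq_abs]
    linear_combination
      t ^ 2 * hs - c₁ * c₂ * t ^ 2 * (⟪u₁, u₂ - u₁⟫ - ⟪u₂, u₂ - u₁⟫ - ‖u₂ - u₁‖ ^ 2) * hdiff

theorem stmt_11_general (n : ℕ) (ρ₁ ρ₂ H₁ H₂ α₁ α₂ : ℝ)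
    (hρ₁ : 0 < ρ₁) (hρ₂ : 0 < ρ₂) (hH₁ : 0 < H₁) (hH₂ : 0 < H₂)
    (hα₁ : 0 < α₁) (hα₂ : 0 < α₂) (a : ℝ) (u₁ u₂ : EuclideanSpace ℝ (Fin n))
    (hv : u₂ - u₁ ≠ 0)
    (hunstable : a - ρ₁ * ρ₂ / (ρ₁ * H₂ * α₂ + ρ₂ * H₁ * α₁) * ‖u₂ - u₁‖ ^ 2 < 0) :
    ∃ ω : ℝ → ℂ,
      (∀ t : ℝ, 0 < t →
        (ω t).im ≠ 0 ∧
        ∀ z : ℂ,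
          ((ρ₁ / (H₁ * α₁) : ℝ) : ℂ)
              * (z - ((⟪u₁, (t • (u₂ - u₁) : EuclideanSpace ℝ (Fin n))⟫ : ℝ) : ℂ)) ^ 2
            + ((ρ₂ / (H₂ * α₂) : ℝ) : ℂ)
              * (z - ((⟪u₂, (t • (u₂ - u₁) : EuclideanSpace ℝ (Fin n))⟫ : ℝ) : ℂ)) ^ 2
            - ((a * ‖(t • (u₂ - u₁) : EuclideanSpace ℝ (Fin n))‖ ^ 2 : ℝ) : ℂ) = 0
          ↔ (z = ω t ∨ z = (starRingEnd ℂ) (ω t)))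
      ∧ Filter.Tendsto (fun t => |(ω t).im|) Filter.atTop Filter.atTop := by
  set v := u₂ - u₁
  set c₁ := ρ₁ / (H₁ * α₁)
  set c₂ := ρ₂ / (H₂ * α₂)
  have hc : 0 < c₁ + c₂ := by positivity
  have hmargin : 0 < c₁ * c₂ * ‖v‖ ^ 2 - (c₁ + c₂) * a := by
    have hreduced : ρ₁ * ρ₂ / (ρ₁ * H₂ * α₂ + ρ₂ * H₁ * α₁) = c₁ * c₂ / (c₁ + c₂) := by
      simp only [c₁, c₂]
      field_simp
    rw [hreduced, div_mul_eq_mul_div, sub_neg, lt_div_iff₀ hc] at hunstable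
    linarith
  have hdisc : 0 < ‖v‖ ^ 2 * (c₁ * c₂ * ‖v‖ ^ 2 - (c₁ + c₂) * a) :=
    mul_pos (pow_pos (norm_pos_iff.2 hv) 2) hmargin
  set s := √(‖v‖ ^ 2 * (c₁ * c₂ * ‖v‖ ^ 2 - (c₁ + c₂) * a)) / (c₁ + c₂)
  have hs_pos : 0 < s := div_pos (Real.sqrt_pos.2 hdisc) hc
  have hs : (c₁ + c₂) ^ 2 * s ^ 2 = ‖v‖ ^ 2 * (c₁ * c₂ * ‖v‖ ^ 2 - (c₁ + c₂) * a) := by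
    rw [div_pow, Real.sq_sqrt hdisc.le]
    field_simp
  refine ⟨fun t => ⟨t * ((c₁ * ⟪u₁, v⟫ + c₂ * ⟪u₂, v⟫) / (c₁ + c₂)), t * s⟩,
    fun t ht => ⟨(mul_pos ht hs_pos).ne',
      weighted_sq_sub_eq_zero_iff_along_ray hc.ne' (mul_div_cancel₀ _ hc.ne') hs t⟩, ?_⟩
  exact Filter.tendsto_abs_atTop_atTop.comp (Filter.tendsto_id.atTop_mul_const hs_pos)

/-- Kelvin–Helmholtz-type instability of the Kakinuma model when the stability condition is
violated: along `ξ_t = t v` with `v = u₂ − u₁`, the frozen-coefficient dispersion relation has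
two non-real complex conjugate roots whose imaginary parts blow up as `t → +∞`. -/
theorem stmt_11 (n : ℕ) (hn : 1 ≤ n) (ρ₁ ρ₂ H₁ H₂ α₁ α₂ : ℝ)
    (hρ₁ : 0 < ρ₁) (hρ₂ : 0 < ρ₂) (hH₁ : 0 < H₁) (hH₂ : 0 < H₂)
    (hα₁ : 0 < α₁) (hα₂ : 0 < α₂) (a : ℝ) (u₁ u₂ : EuclideanSpace ℝ (Fin n))
    (hv : u₂ - u₁ ≠ 0)
    (hunstable : a - ρ₁ * ρ₂ / (ρ₁ * H₂ * α₂ + ρ₂ * H₁ * α₁) * ‖u₂ - u₁‖ ^ 2 < 0) :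
    ∃ ω : ℝ → ℂ,
      (∀ t : ℝ, 0 < t →
        (ω t).im ≠ 0 ∧
        ∀ z : ℂ,
          ((ρ₁ / (H₁ * α₁) : ℝ) : ℂ)
              * (z - ((⟪u₁, (t • (u₂ - u₁) : EuclideanSpace ℝ (Fin n))⟫ : ℝ) : ℂ)) ^ 2
            + ((ρ₂ / (H₂ * α₂) : ℝ) : ℂ)
              * (z - ((⟪u₂, (t • (u₂ - u₁) : EuclideanSpace ℝ (Fin n))⟫ : ℝ) : ℂ)) ^ 2
            - ((a * ‖(t • (u₂ - u₁) : EuclideanSpace ℝ (Fin n))‖ ^ 2 : ℝ) : ℂ) = 0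
          ↔ (z = ω t ∨ z = (starRingEnd ℂ) (ω t)))
      ∧ Filter.Tendsto (fun t => |(ω t).im|) Filter.atTop Filter.atTop :=
  stmt_11_general n ρ₁ ρ₂ H₁ H₂ α₁ α₂ hρ₁ hρ₂ hH₁ hH₂ hα₁ hα₂ a u₁ u₂ hv hunstable
end

section
/- Let A be a real symmetric positive definite (N+1)×(N+1) matrix and let Ã = [[0, 𝟙ᵀ],[−𝟙, A]] be the associated (N+2)×(N+2) matrix, where 𝟙 = (1,…,1)ᵀ ∈ ℝ^{N+1}. Then: (1) det Ã = det A · (𝟙ᵀ A⁻¹ 𝟙) > 0, so Ã is invertible; (2) the inverse has the block form Ã⁻¹ = [[q, rᵀ],[−r, Q]] with q ∈ ℝ, r ∈ ℝ^{N+1}, and Q a symmetric (N+1)×(N+1) matrix; (3) q = det A / det Ã > 0; (4) Q is positive semidefinite and Q𝟙 = 0. -/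
/-!
Everything is the Schur complement of the invertible block `A`. With `v = A⁻¹𝟙` and
`s = 𝟙ᵀA⁻¹𝟙 > 0`, the complement of `A` in `Ã` is the `1 × 1` matrix `s`, so `det Ã = det A · s`
and `Ã⁻¹ = [[s⁻¹, -s⁻¹vᵀ], [s⁻¹v, A⁻¹ - s⁻¹vvᵀ]]`. The block `Q = A⁻¹ - s⁻¹vvᵀ` kills `𝟙`, and
`Q = PᵀA⁻¹P` for `P = I - s⁻¹𝟙vᵀ`, which makes it positive semidefinite.
-/

open Matrix

namespace Matrix

variable {n K : Type*} [Fintype n] [Field K]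

theorem mulVec_sub_smul_vecMulVec_eq_zero (B : Matrix n n K) (u : n → K)
    (hs : u ⬝ᵥ B *ᵥ u ≠ 0) :
    (B - (u ⬝ᵥ B *ᵥ u)⁻¹ • vecMulVec (B *ᵥ u) (B *ᵥ u)) *ᵥ u = 0 := by
  rw [sub_mulVec, smul_mulVec, vecMulVec_mulVec, dotProduct_comm (B *ᵥ u), op_smul_eq_smul,
    smul_smul, inv_mul_cancel₀ hs, one_smul, sub_self]

variable [DecidableEq n]

def skewBorder (u : n → K) (A : Matrix n n K) : Matrix (Fin 1 ⊕ n) (Fin 1 ⊕ n) K :=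
  fromBlocks 0 (replicateRow (Fin 1) u) (replicateCol (Fin 1) (-u)) A

theorem det_skewBorder (u : n → K) {A : Matrix n n K} (hA : IsUnit A.det) :
    (skewBorder u A).det = A.det * (u ⬝ᵥ A⁻¹ *ᵥ u) := by
  have := A.invertibleOfIsUnitDet hA
  have hschur : 0 - replicateRow (Fin 1) u * ⅟A * replicateCol (Fin 1) (-u) =
      of fun _ _ => u ⬝ᵥ A⁻¹ *ᵥ u := by
    rw [invOf_eq_nonsing_inv, Matrix.mul_assoc, ← replicateCol_mulVec,
      replicateRow_mul_replicateCol, mulVec_neg, dotProduct_neg, zero_sub]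
    ext
    simp
  rw [skewBorder, det_fromBlocks₂₂, hschur, det_fin_one, of_apply]

theorem inv_skewBorder (u : n → K) {A : Matrix n n K} (hA : IsUnit A.det) {s : K}
    (hs : u ⬝ᵥ A⁻¹ *ᵥ u = s) (hs₀ : s ≠ 0) :
    (skewBorder u A)⁻¹ =
      fromBlocks (of fun _ _ => s⁻¹) (replicateRow (Fin 1) (-(s⁻¹ • u ᵥ* A⁻¹)))
        (replicateCol (Fin 1) (s⁻¹ • A⁻¹ *ᵥ u))
        (A⁻¹ - s⁻¹ • vecMulVec (A⁻¹ *ᵥ u) (u ᵥ* A⁻¹)) := by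
  refine inv_eq_right_inv ?_
  rw [skewBorder, fromBlocks_multiply, ← fromBlocks_one]
  have hAv : A *ᵥ (A⁻¹ *ᵥ u) = u := by rw [mulVec_mulVec, mul_nonsing_inv A hA, one_mulVec]
  congr 1
  · rw [Matrix.zero_mul, zero_add, replicateRow_mul_replicateCol, dotProduct_smul, hs, smul_eq_mul,
      inv_mul_cancel₀ hs₀]
    ext i j
    fin_cases i; fin_cases j; rfl
  · rw [Matrix.zero_mul, zero_add, ← replicateRow_vecMul, vecMul_sub, vecMul_smul, vecMul_vecMulVec,
      hs, smul_smul, inv_mul_cancel₀ hs₀, one_smul, sub_self, replicateRow_zero]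
  · rw [← replicateCol_mulVec, mulVec_smul, hAv]
    ext i j
    simp [mul_apply, mul_comm]
  · rw [Matrix.mul_sub, mul_nonsing_inv A hA, Matrix.mul_smul, mul_vecMulVec, hAv]
    ext i j
    simp [mul_apply, vecMulVec_apply]
    ring

theorem transpose_mul_mul_sub_smul_vecMulVec {B : Matrix n n K} (hB : B.IsSymm) (u : n → K) :
    (1 - (u ⬝ᵥ B *ᵥ u)⁻¹ • vecMulVec u (B *ᵥ u))ᵀ * B *
        (1 - (u ⬝ᵥ B *ᵥ u)⁻¹ • vecMulVec u (B *ᵥ u)) =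
      B - (u ⬝ᵥ B *ᵥ u)⁻¹ • vecMulVec (B *ᵥ u) (B *ᵥ u) := by
  set s := u ⬝ᵥ B *ᵥ u
  set v := B *ᵥ u
  have huB : u ᵥ* B = v := by rw [← mulVec_transpose, hB.eq]
  simp only [transpose_sub, transpose_one, transpose_smul, transpose_vecMulVec, Matrix.sub_mul,
    Matrix.mul_sub, Matrix.one_mul, Matrix.mul_one, Matrix.smul_mul, Matrix.mul_smul,
    vecMulVec_mul, mul_vecMulVec, huB]
  rcases eq_or_ne s 0 with hs | hs
  · simp [hs]
  · rw [mulVec_sub_smul_vecMulVec_eq_zero B u hs, zero_vecMulVec, smul_zero, sub_zero]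

theorem PosSemidef.sub_smul_vecMulVec {B : Matrix n n ℝ} (hB : B.PosSemidef) (u : n → ℝ) :
    (B - (u ⬝ᵥ B *ᵥ u)⁻¹ • vecMulVec (B *ᵥ u) (B *ᵥ u)).PosSemidef := by
  rw [← transpose_mul_mul_sub_smul_vecMulVec (isHermitian_iff_isSymm.1 hB.isHermitian)]
  have := hB.conjTranspose_mul_mul_same (1 - (u ⬝ᵥ B *ᵥ u)⁻¹ • vecMulVec u (B *ᵥ u))
  rwa [conjTranspose_eq_transpose_of_trivial] at this

end Matrix

theorem tilde_eq_skewBorder {m : ℕ} (A : Matrix (Fin m) (Fin m) ℝ) :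
    tilde A = skewBorder (fun _ => 1) A :=
  rfl

/-- Structure of the bordered matrix `Ã = [[0, 𝟙ᵀ], [−𝟙, A]]` for a symmetric positive
definite matrix `A`: `det Ã = det A · 𝟙ᵀA⁻¹𝟙 > 0`, the inverse has block form
`[[q, rᵀ], [−r, Q]]` with `Q` symmetric, `q = det A / det Ã > 0`, `Q` positive semidefinite,
and `Q𝟙 = 0`. -/
theorem stmt_12 (N : ℕ) (A : Matrix (Fin (N + 1)) (Fin (N + 1)) ℝ) (hA : A.PosDef) :
    (tilde A).det
        = A.det * dotProduct (fun _ => (1 : ℝ)) (A⁻¹.mulVec fun _ => (1 : ℝ))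
      ∧ 0 < (tilde A).det
      ∧ ∃ (q : ℝ) (r : Fin (N + 1) → ℝ) (Q : Matrix (Fin (N + 1)) (Fin (N + 1)) ℝ),
          (tilde A)⁻¹
              = Matrix.fromBlocks (Matrix.of fun _ _ => q) (Matrix.of fun _ j => r j)
                (Matrix.of fun i _ => -(r i)) Q
            ∧ Q.IsSymm
            ∧ q = A.det / (tilde A).det
            ∧ 0 < q
            ∧ Q.PosSemidef
            ∧ Q.mulVec (fun _ => (1 : ℝ)) = 0 := by
  set u : Fin (N + 1) → ℝ := fun _ => 1
  have hdet : IsUnit A.det := hA.det_pos.ne'.isUnit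
  have hinv : A⁻¹.PosDef := hA.inv
  have hsymm : u ᵥ* A⁻¹ = A⁻¹ *ᵥ u := by
    rw [← mulVec_transpose, (isHermitian_iff_isSymm.1 hinv.isHermitian).eq]
  have hs : 0 < u ⬝ᵥ A⁻¹ *ᵥ u := by
    simpa using hinv.dotProduct_mulVec_pos (x := u) (Function.ne_iff.2 ⟨0, one_ne_zero⟩)
  have hdet_tilde : (tilde A).det = A.det * (u ⬝ᵥ A⁻¹ *ᵥ u) := det_skewBorder u hdet
  have hQ := hinv.posSemidef.sub_smul_vecMulVec u
  refine ⟨hdet_tilde, hdet_tilde ▸ mul_pos hA.det_pos hs, (u ⬝ᵥ A⁻¹ *ᵥ u)⁻¹,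
    -((u ⬝ᵥ A⁻¹ *ᵥ u)⁻¹ • A⁻¹ *ᵥ u), _, ?_, isHermitian_iff_isSymm.1 hQ.isHermitian, ?_,
    inv_pos.2 hs, hQ, mulVec_sub_smul_vecMulVec_eq_zero _ u hs.ne'⟩
  · rw [tilde_eq_skewBorder, inv_skewBorder u hdet rfl hs.ne', hsymm]
    simp only [replicateRow, replicateCol, Pi.neg_apply, neg_neg]
  · rw [hdet_tilde, div_mul_cancel_left₀ hA.det_pos.ne']
end

section
/- Let A be a real symmetric positive definite (N+1)×(N+1) matrix, let Ã = [[0, 𝟙ᵀ],[−𝟙, A]] with 𝟙 = (1,…,1)ᵀ ∈ ℝ^{N+1}, set α = det A / det Ã, and let Q be the lower-right (N+1)×(N+1) block of Ã⁻¹ (so that Ã⁻¹ = [[q, rᵀ],[−r, Q]]). Then for every φ ∈ ℝ^{N+1}: φᵀ A φ = α (𝟙·φ)² + (Aφ)ᵀ Q (Aφ). -/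
namespace Matrix

section QuadraticForm

variable {n R : Type*} [Fintype n] [DecidableEq n] [CommRing R]

lemma mulVec_dotProduct_inv_mulVec {A : Matrix n n R} (hA : A.IsSymm) (hdet : IsUnit A.det)
    (φ ψ : n → R) : A *ᵥ φ ⬝ᵥ A⁻¹ *ᵥ ψ = φ ⬝ᵥ ψ := by
  have hAφ : A *ᵥ φ = φ ᵥ* A := by rw [← vecMul_transpose, hA.eq]
  rw [hAφ, ← dotProduct_mulVec, mulVec_mulVec, mul_nonsing_inv A hdet, one_mulVec]

lemma vecMul_inv_dotProduct_mulVec {A : Matrix n n R} (hdet : IsUnit A.det) (φ ψ : n → R) :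
    ψ ᵥ* A⁻¹ ⬝ᵥ A *ᵥ φ = ψ ⬝ᵥ φ := by
  rw [← dotProduct_mulVec, mulVec_mulVec, nonsing_inv_mul A hdet, one_mulVec]

lemma mulVec_dotProduct_inv_sub_smul_vecMulVec_mulVec {A : Matrix n n R} (hA : A.IsSymm)
    (hdet : IsUnit A.det) (c : R) (φ : n → R) :
    A *ᵥ φ ⬝ᵥ (A⁻¹ - c • vecMulVec (A⁻¹ *ᵥ 1) (1 ᵥ* A⁻¹)) *ᵥ A *ᵥ φ
      = φ ⬝ᵥ A *ᵥ φ - c * (∑ i, φ i) ^ 2 := by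
  rw [sub_mulVec, smul_mulVec, vecMulVec_mulVec, vecMul_inv_dotProduct_mulVec hdet,
    dotProduct_sub, dotProduct_smul, op_smul_eq_smul, dotProduct_smul,
    mulVec_dotProduct_inv_mulVec hA hdet, mulVec_dotProduct_inv_mulVec hA hdet, one_dotProduct,
    dotProduct_one, dotProduct_comm, smul_eq_mul, smul_eq_mul]
  ring

end QuadraticForm

lemma PosDef.one_dotProduct_inv_mulVec_one_pos {n : Type*} [Fintype n] [DecidableEq n]
    [Nonempty n] {A : Matrix n n ℝ} (hA : A.PosDef) : 0 < 1 ⬝ᵥ A⁻¹ *ᵥ 1 := by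
  simpa [star_trivial] using hA.inv.dotProduct_mulVec_pos one_ne_zero

end Matrix

section Tilde

open Matrix

variable {m : ℕ}

lemma tilde_schurComplement (A : Matrix (Fin m) (Fin m) ℝ) :
    (0 : Matrix (Fin 1) (Fin 1) ℝ) - (of fun _ _ => 1 : Matrix (Fin 1) (Fin m) ℝ) * A⁻¹ *
      (of fun _ _ => -1 : Matrix (Fin m) (Fin 1) ℝ)
      = of fun _ _ => 1 ⬝ᵥ A⁻¹ *ᵥ 1 := by
  ext
  simp [mul_apply, dotProduct, mulVec, Finset.sum_comm (γ := Fin m)]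

lemma det_tilde {A : Matrix (Fin m) (Fin m) ℝ} (hA : IsUnit A.det) :
    (tilde A).det = A.det * (1 ⬝ᵥ A⁻¹ *ᵥ 1) := by
  let := A.invertibleOfIsUnitDet hA
  rw [tilde, det_fromBlocks₂₂, invOf_eq_nonsing_inv, tilde_schurComplement,
    det_unique (n := Fin 1), of_apply]

lemma toBlocks₂₂_inv_tilde {A : Matrix (Fin m) (Fin m) ℝ} (hA : IsUnit A.det)
    (hs : 1 ⬝ᵥ A⁻¹ *ᵥ 1 ≠ 0) :
    toBlocks₂₂ (tilde A)⁻¹ = A⁻¹ - (1 ⬝ᵥ A⁻¹ *ᵥ 1)⁻¹ • vecMulVec (A⁻¹ *ᵥ 1) (1 ᵥ* A⁻¹) := by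
  let := A.invertibleOfIsUnitDet hA
  have hS := tilde_schurComplement A
  rw [tilde]
  set B : Matrix (Fin 1) (Fin m) ℝ := of fun _ _ => 1
  set C : Matrix (Fin m) (Fin 1) ℝ := of fun _ _ => -1
  let := ((0 : Matrix (Fin 1) (Fin 1) ℝ) - B * ⅟A * C).invertibleOfIsUnitDet (by
    rw [invOf_eq_nonsing_inv, hS, det_unique (n := Fin 1)]; exact hs.isUnit)
  let := fromBlocks₂₂Invertible 0 B C A
  rw [← invOf_eq_nonsing_inv, invOf_fromBlocks₂₂_eq, toBlocks_fromBlocks₂₂]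
  simp only [invOf_eq_nonsing_inv]
  rw [hS]
  ext i j
  simp only [B, C, dotProduct, Pi.one_apply, mulVec, mul_one, Finset.mul_sum, one_mul,
    inv_subsingleton, of_apply, Ring.inverse_eq_inv', Matrix.add_apply, mul_apply,
    Finset.univ_unique, Fin.default_eq_zero, Fin.isValue, mul_neg, Finset.sum_neg_distrib, neg_mul,
    Finset.sum_mul, Finset.sum_singleton, diagonal_apply_eq, vecMulVec, vecMul, smul_of,
    Matrix.sub_apply, Pi.smul_apply, smul_eq_mul, sub_eq_add_neg, add_right_inj, neg_inj]
  exact Finset.sum_congr rfl fun _ _ => Finset.sum_congr rfl fun _ _ => by ring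

end Tilde

/-- Decomposition identity for a symmetric positive definite matrix `A`:
`φᵀAφ = α (𝟙·φ)² + (Aφ)ᵀ Q (Aφ)`, where `α = det A / det Ã` and `Q` is the lower-right block
of `Ã⁻¹`. -/
theorem stmt_13 (N : ℕ) (A : Matrix (Fin (N + 1)) (Fin (N + 1)) ℝ) (hA : A.PosDef)
    (φ : Fin (N + 1) → ℝ) :
    dotProduct φ (A.mulVec φ)
      = (A.det / (tilde A).det) * (∑ i, φ i) ^ 2
        + dotProduct (A.mulVec φ)
            ((Matrix.toBlocks₂₂ ((tilde A)⁻¹)).mulVec (A.mulVec φ)) := by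
  have hdet : A.det ≠ 0 := hA.det_pos.ne'
  have hsymm : A.IsSymm := Matrix.isHermitian_iff_isSymm.1 hA.isHermitian
  have hs := hA.one_dotProduct_inv_mulVec_one_pos.ne'
  rw [toBlocks₂₂_inv_tilde hdet.isUnit hs, det_tilde hdet.isUnit,
    Matrix.mulVec_dotProduct_inv_sub_smul_vecMulVec_mulVec hsymm hdet.isUnit]
  field_simp
  ring
end

section
/- Let ρ₁, ρ₂, H₁, H₂, α₁, α₂ be positive real numbers, a ∈ ℝ, b ≥ 0, and set s = ρ₁H₂α₂ + ρ₂H₁α₁. Define the real symmetric 3×3 matrix 𝔄₀ = [[a, −ρ₁ρ₂H₁α₁ b/s, −ρ₁ρ₂H₂α₂ b/s],[−ρ₁ρ₂H₁α₁ b/s, ρ₁H₁α₁, 0],[−ρ₁ρ₂H₂α₂ b/s, 0, ρ₂H₂α₂]]. Then det 𝔄₀ = (ρ₁H₁α₁)(ρ₂H₂α₂)( a − (ρ₁ρ₂/s) b² ), and 𝔄₀ is positive definite if and only if a − (ρ₁ρ₂/s) b² > 0. -/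
/-!
Write `𝔄₀ = !![a, c₁, c₂; c₁, d₁, 0; c₂, 0, d₂]` with `d₁, d₂ > 0`. Completing the squares,
`xᵀ𝔄₀x = S x₀² + d₁ (x₁ + c₁/d₁ x₀)² + d₂ (x₂ + c₂/d₂ x₀)²` with the Schur complement
`S = a - c₁²/d₁ - c₂²/d₂`, so `𝔄₀` is positive definite iff `S > 0` (test with
`x = (1, -c₁/d₁, -c₂/d₂)` for the converse), and `det 𝔄₀ = d₁ d₂ S`. For the Kakinuma
coefficients, `c₁²/d₁ + c₂²/d₂ = ρ₁ρ₂ b² (ρ₂H₁α₁ + ρ₁H₂α₂)/s² = ρ₁ρ₂ b²/s`.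
-/

namespace Matrix

variable {a c₁ c₂ d₁ d₂ : ℝ}

theorem det_arrowhead_fin_three (hd₁ : d₁ ≠ 0) (hd₂ : d₂ ≠ 0) :
    !![a, c₁, c₂; c₁, d₁, 0; c₂, 0, d₂].det = d₁ * d₂ * (a - c₁ ^ 2 / d₁ - c₂ ^ 2 / d₂) := by
  simp only [det_fin_three, of_apply, cons_val', cons_val_zero, cons_val_fin_one, cons_val_one,
    cons_val, mul_zero, sub_zero, zero_mul, add_zero]
  field_simp

theorem dotProduct_arrowhead_mulVec_fin_three (hd₁ : d₁ ≠ 0) (hd₂ : d₂ ≠ 0) (x : Fin 3 → ℝ) :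
    x ⬝ᵥ !![a, c₁, c₂; c₁, d₁, 0; c₂, 0, d₂] *ᵥ x =
      (a - c₁ ^ 2 / d₁ - c₂ ^ 2 / d₂) * x 0 ^ 2 + d₁ * (x 1 + c₁ / d₁ * x 0) ^ 2
        + d₂ * (x 2 + c₂ / d₂ * x 0) ^ 2 := by
  simp only [dotProduct, mulVec, of_apply, cons_val', cons_val_fin_one, Fin.sum_univ_three,
    cons_val_zero, cons_val_one, cons_val, zero_mul, add_zero]
  field_simp
  ring

theorem posDef_arrowhead_fin_three_iff (hd₁ : 0 < d₁) (hd₂ : 0 < d₂) :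
    !![a, c₁, c₂; c₁, d₁, 0; c₂, 0, d₂].PosDef ↔ 0 < a - c₁ ^ 2 / d₁ - c₂ ^ 2 / d₂ := by
  have hform := dotProduct_arrowhead_mulVec_fin_three (a := a) (c₁ := c₁) (c₂ := c₂)
    hd₁.ne' hd₂.ne'
  constructor
  · intro hpos
    have hx : ![1, -(c₁ / d₁), -(c₂ / d₂)] ≠ 0 := fun h ↦ by simpa using congrFun h 0
    have hSx := hpos.dotProduct_mulVec_pos hx
    rw [star_trivial, hform] at hSx
    simpa using hSx
  · intro hS
    refine PosDef.of_dotProduct_mulVec_pos ?_ fun x hx ↦ ?_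
    · ext i j
      fin_cases i <;> fin_cases j <;> rfl
    rw [star_trivial, hform]
    have h₀ : 0 ≤ (a - c₁ ^ 2 / d₁ - c₂ ^ 2 / d₂) * x 0 ^ 2 := by positivity
    have h₁ : 0 ≤ d₁ * (x 1 + c₁ / d₁ * x 0) ^ 2 := by positivity
    have h₂ : 0 ≤ d₂ * (x 2 + c₂ / d₂ * x 0) ^ 2 := by positivity
    by_cases hx₀ : x 0 = 0
    · have hx₁₂ : x 1 ≠ 0 ∨ x 2 ≠ 0 := by
        by_contra! h
        exact hx (funext fun i ↦ by fin_cases i <;> simp [hx₀, h.1, h.2])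
      rcases hx₁₂ with hx₁ | hx₂
      · have : 0 < d₁ * (x 1 + c₁ / d₁ * x 0) ^ 2 := by
          rw [hx₀, mul_zero, add_zero]
          positivity
        linarith
      · have : 0 < d₂ * (x 2 + c₂ / d₂ * x 0) ^ 2 := by
          rw [hx₀, mul_zero, add_zero]
          positivity
        linarith
    · have : 0 < (a - c₁ ^ 2 / d₁ - c₂ ^ 2 / d₂) * x 0 ^ 2 := by positivity
      linarith

end Matrix

theorem stmt_15_general (ρ₁ ρ₂ H₁ H₂ α₁ α₂ : ℝ)
    (hρ₁ : 0 < ρ₁) (hρ₂ : 0 < ρ₂) (hH₁ : 0 < H₁) (hH₂ : 0 < H₂)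
    (hα₁ : 0 < α₁) (hα₂ : 0 < α₂) (a b : ℝ) :
    (Matrix.det
        !![a, -(ρ₁ * ρ₂ * H₁ * α₁ * b / (ρ₁ * H₂ * α₂ + ρ₂ * H₁ * α₁)),
            -(ρ₁ * ρ₂ * H₂ * α₂ * b / (ρ₁ * H₂ * α₂ + ρ₂ * H₁ * α₁));
          -(ρ₁ * ρ₂ * H₁ * α₁ * b / (ρ₁ * H₂ * α₂ + ρ₂ * H₁ * α₁)), ρ₁ * H₁ * α₁, 0;
          -(ρ₁ * ρ₂ * H₂ * α₂ * b / (ρ₁ * H₂ * α₂ + ρ₂ * H₁ * α₁)), 0, ρ₂ * H₂ * α₂]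
      = (ρ₁ * H₁ * α₁) * (ρ₂ * H₂ * α₂)
          * (a - ρ₁ * ρ₂ / (ρ₁ * H₂ * α₂ + ρ₂ * H₁ * α₁) * b ^ 2))
    ∧ (Matrix.PosDef
        !![a, -(ρ₁ * ρ₂ * H₁ * α₁ * b / (ρ₁ * H₂ * α₂ + ρ₂ * H₁ * α₁)),
            -(ρ₁ * ρ₂ * H₂ * α₂ * b / (ρ₁ * H₂ * α₂ + ρ₂ * H₁ * α₁));
          -(ρ₁ * ρ₂ * H₁ * α₁ * b / (ρ₁ * H₂ * α₂ + ρ₂ * H₁ * α₁)), ρ₁ * H₁ * α₁, 0;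
          -(ρ₁ * ρ₂ * H₂ * α₂ * b / (ρ₁ * H₂ * α₂ + ρ₂ * H₁ * α₁)), 0, ρ₂ * H₂ * α₂]
      ↔ 0 < a - ρ₁ * ρ₂ / (ρ₁ * H₂ * α₂ + ρ₂ * H₁ * α₁) * b ^ 2) := by
  have hd₁ : 0 < ρ₁ * H₁ * α₁ := by positivity
  have hd₂ : 0 < ρ₂ * H₂ * α₂ := by positivity
  have hs : 0 < ρ₁ * H₂ * α₂ + ρ₂ * H₁ * α₁ := by positivity
  have hschur : a - (-(ρ₁ * ρ₂ * H₁ * α₁ * b / (ρ₁ * H₂ * α₂ + ρ₂ * H₁ * α₁))) ^ 2 / (ρ₁ * H₁ * α₁)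
      - (-(ρ₁ * ρ₂ * H₂ * α₂ * b / (ρ₁ * H₂ * α₂ + ρ₂ * H₁ * α₁))) ^ 2 / (ρ₂ * H₂ * α₂)
      = a - ρ₁ * ρ₂ / (ρ₁ * H₂ * α₂ + ρ₂ * H₁ * α₁) * b ^ 2 := by
    field_simp
    ring
  rw [Matrix.det_arrowhead_fin_three hd₁.ne' hd₂.ne', Matrix.posDef_arrowhead_fin_three_iff hd₁ hd₂,
    hschur]
  exact ⟨rfl, Iff.rfl⟩

/-- Determinant and positive-definiteness criterion for the 3×3 matrix `𝔄₀` arising in the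
energy estimate for the linearized Kakinuma model; its positivity is exactly the strict
stability condition. -/
theorem stmt_15 (ρ₁ ρ₂ H₁ H₂ α₁ α₂ : ℝ)
    (hρ₁ : 0 < ρ₁) (hρ₂ : 0 < ρ₂) (hH₁ : 0 < H₁) (hH₂ : 0 < H₂)
    (hα₁ : 0 < α₁) (hα₂ : 0 < α₂) (a b : ℝ) (hb : 0 ≤ b) :
    (Matrix.det
        !![a, -(ρ₁ * ρ₂ * H₁ * α₁ * b / (ρ₁ * H₂ * α₂ + ρ₂ * H₁ * α₁)),
            -(ρ₁ * ρ₂ * H₂ * α₂ * b / (ρ₁ * H₂ * α₂ + ρ₂ * H₁ * α₁));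
          -(ρ₁ * ρ₂ * H₁ * α₁ * b / (ρ₁ * H₂ * α₂ + ρ₂ * H₁ * α₁)), ρ₁ * H₁ * α₁, 0;
          -(ρ₁ * ρ₂ * H₂ * α₂ * b / (ρ₁ * H₂ * α₂ + ρ₂ * H₁ * α₁)), 0, ρ₂ * H₂ * α₂]
      = (ρ₁ * H₁ * α₁) * (ρ₂ * H₂ * α₂)
          * (a - ρ₁ * ρ₂ / (ρ₁ * H₂ * α₂ + ρ₂ * H₁ * α₁) * b ^ 2))
    ∧ (Matrix.PosDef
        !![a, -(ρ₁ * ρ₂ * H₁ * α₁ * b / (ρ₁ * H₂ * α₂ + ρ₂ * H₁ * α₁)),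
            -(ρ₁ * ρ₂ * H₂ * α₂ * b / (ρ₁ * H₂ * α₂ + ρ₂ * H₁ * α₁));
          -(ρ₁ * ρ₂ * H₁ * α₁ * b / (ρ₁ * H₂ * α₂ + ρ₂ * H₁ * α₁)), ρ₁ * H₁ * α₁, 0;
          -(ρ₁ * ρ₂ * H₂ * α₂ * b / (ρ₁ * H₂ * α₂ + ρ₂ * H₁ * α₁)), 0, ρ₂ * H₂ * α₂]
      ↔ 0 < a - ρ₁ * ρ₂ / (ρ₁ * H₂ * α₂ + ρ₂ * H₁ * α₁) * b ^ 2) :=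
  stmt_15_general ρ₁ ρ₂ H₁ H₂ α₁ α₂ hρ₁ hρ₂ hH₁ hH₂ hα₁ hα₂ a b
end

section
/- Let n ≥ 1 and N ≥ 0 be integers, let H : ℝⁿ → ℝ be a smooth function with H(x) > 0 for all x, and let φ₀, φ₁, …, φ_N : ℝⁿ → ℝ be smooth compactly supported functions. For 0 ≤ i, j ≤ N define L_{ij}φ_j = −∇·( (1/(2(i+j)+1)) H^{2(i+j)+1} ∇φ_j ) + (4ij/(2(i+j)−1)) H^{2(i+j)−1} φ_j, with the convention 0/0 = 0. Then Σ_{i,j=0}^{N} ∫_{ℝⁿ} (L_{ij}φ_j)(x) φ_i(x) dx = ∫_{ℝⁿ} ∫₀^{H(x)} ( | Σ_{i=0}^{N} z^{2i} ∇φ_i(x) |² + ( Σ_{i=0}^{N} 2i z^{2i−1} φ_i(x) )² ) dz dx. -/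
open MeasureTheory

open RealInnerProductSpace intervalIntegral

/-- The divergence of a vector field on `ℝⁿ`: the trace of its derivative. -/
noncomputable def divg {n : ℕ}
    (F : EuclideanSpace ℝ (Fin n) → EuclideanSpace ℝ (Fin n))
    (x : EuclideanSpace ℝ (Fin n)) : ℝ :=
  ∑ i : Fin n, fderiv ℝ F x (EuclideanSpace.single i (1 : ℝ)) i



variable {n : ℕ}

lemma inner_gradient_eq (f : EuclideanSpace ℝ (Fin n) → ℝ) (x v : EuclideanSpace ℝ (Fin n)) :
    ⟪gradient f x, v⟫ = fderiv ℝ f x v := by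
  simp [gradient, InnerProductSpace.toDual_symm_apply]

lemma gradient_apply (f : EuclideanSpace ℝ (Fin n) → ℝ) (x : EuclideanSpace ℝ (Fin n)) (i : Fin n) :
    gradient f x i = fderiv ℝ f x (EuclideanSpace.single i 1) := by
  rw [← inner_gradient_eq, EuclideanSpace.inner_single_right]
  simp

lemma contDiff_gradient {f : EuclideanSpace ℝ (Fin n) → ℝ} (hf : ContDiff ℝ (⊤ : ℕ∞) f) :
    ContDiff ℝ (⊤ : ℕ∞) (gradient f) := by
  have h1 : ContDiff ℝ (⊤ : ℕ∞) (fderiv ℝ f) := hf.fderiv_right (by simp)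
  have h2 := (InnerProductSpace.toDual ℝ (EuclideanSpace ℝ (Fin n))).symm.toContinuousLinearEquiv.toContinuousLinearMap.contDiff.comp h1
  exact h2

lemma hasCompactSupport_gradient {f : EuclideanSpace ℝ (Fin n) → ℝ} (hf : HasCompactSupport f) :
    HasCompactSupport (gradient f) := by
  have := hf.fderiv (𝕜 := ℝ)
  exact this.comp_left (g := (InnerProductSpace.toDual ℝ (EuclideanSpace ℝ (Fin n))).symm) (by simp)

lemma continuous_gradient {f : EuclideanSpace ℝ (Fin n) → ℝ} (hf : ContDiff ℝ (⊤ : ℕ∞) f) :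
    Continuous (gradient f) := (contDiff_gradient hf).continuous

lemma fderiv_component {F : EuclideanSpace ℝ (Fin n) → EuclideanSpace ℝ (Fin n)}
    (hF : Differentiable ℝ F) (x v : EuclideanSpace ℝ (Fin n)) (k : Fin n) :
    fderiv ℝ F x v k = fderiv ℝ (fun y => F y k) x v := by
  have h : HasFDerivAt (⇑(EuclideanSpace.proj (𝕜 := ℝ) k) ∘ F)
      ((EuclideanSpace.proj k).comp (fderiv ℝ F x)) x :=
    (EuclideanSpace.proj k).hasFDerivAt.comp x (hF x).hasFDerivAt
  rw [show (fun y => F y k) = (⇑(EuclideanSpace.proj (𝕜 := ℝ) k) ∘ F) from rfl, h.fderiv]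
  rfl

lemma continuous_divg {F : EuclideanSpace ℝ (Fin n) → EuclideanSpace ℝ (Fin n)}
    (hF : ContDiff ℝ (⊤ : ℕ∞) F) : Continuous (divg F) := by
  apply continuous_finset_sum
  intro k _
  exact (EuclideanSpace.proj k).continuous.comp
    ((hF.continuous_fderiv (by simp)).clm_apply continuous_const)

lemma hasCompactSupport_divg {F : EuclideanSpace ℝ (Fin n) → EuclideanSpace ℝ (Fin n)}
    (hF : HasCompactSupport F) : HasCompactSupport (divg F) := by
  apply HasCompactSupport.intro hF
  intro x hx
  have h0 : fderiv ℝ F x = 0 := by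
    by_contra h
    exact hx (support_fderiv_subset ℝ (f := F) h)
  simp [divg, h0]

lemma integral_divg_mul' {F : EuclideanSpace ℝ (Fin n) → EuclideanSpace ℝ (Fin n)}
    {g : EuclideanSpace ℝ (Fin n) → ℝ}
    (hF : ContDiff ℝ (⊤ : ℕ∞) F) (hFc : HasCompactSupport F)
    (hg : ContDiff ℝ (⊤ : ℕ∞) g) (hgc : HasCompactSupport g) :
    ∫ x, divg F x * g x = - ∫ x, ⟪F x, gradient g x⟫ := by
  have hFd : Differentiable ℝ F := hF.differentiable (by simp)
  have hgd : Differentiable ℝ g := hg.differentiable (by simp)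
  -- component functions
  have hcomp : ∀ k : Fin n, ContDiff ℝ (⊤ : ℕ∞) (fun y => F y k) := fun k =>
    (EuclideanSpace.proj (𝕜 := ℝ) k).contDiff.comp hF
  have hcompc : ∀ k : Fin n, HasCompactSupport (fun y => F y k) := fun k =>
    hFc.comp_left (g := EuclideanSpace.proj (𝕜 := ℝ) k) (by simp)
  obtain hlipF : ∀ k : Fin n, ∃ C, LipschitzWith C (fun y => F y k) := fun k =>
    ContDiff.lipschitzWith_of_hasCompactSupport (hcompc k) (hcomp k) (by simp)
  obtain ⟨D, hlipg⟩ : ∃ D, LipschitzWith D g :=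
    ContDiff.lipschitzWith_of_hasCompactSupport hgc hg (by simp)
  have key : ∀ k : Fin n,
      ∫ x, fderiv ℝ (fun y => F y k) x (EuclideanSpace.single k 1) * g x
        = - ∫ x, fderiv ℝ g x (EuclideanSpace.single k 1) * F x k := by
    intro k
    obtain ⟨C, hC⟩ := hlipF k
    have h1 := LipschitzWith.integral_lineDeriv_mul_eq (μ := volume) hC hlipg hgc
      (EuclideanSpace.single k 1)
    simp only [((hcomp k).differentiable (by simp)).differentiableAt.lineDeriv_eq_fderiv,
      (hgd _).lineDeriv_eq_fderiv, map_neg] at h1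
    rw [show (fun y => F y k) = fun y => F y k from rfl] at h1
    rw [h1, ← MeasureTheory.integral_neg]
    congr 1; ext x; ring
  calc ∫ x, divg F x * g x
      = ∫ x, ∑ k : Fin n, fderiv ℝ (fun y => F y k) x (EuclideanSpace.single k 1) * g x := by
        congr 1; ext x
        rw [divg, Finset.sum_mul]
        refine Finset.sum_congr rfl fun k _ => ?_
        rw [fderiv_component hFd]
    _ = ∑ k : Fin n, ∫ x, fderiv ℝ (fun y => F y k) x (EuclideanSpace.single k 1) * g x := by
        apply MeasureTheory.integral_finset_sum
        intro k _
        apply Continuous.integrable_of_hasCompactSupport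
        · exact (((hcomp k).continuous_fderiv (by simp)).clm_apply continuous_const).mul
            hg.continuous
        · exact (hgc.mul_left)
    _ = ∑ k : Fin n, - ∫ x, fderiv ℝ g x (EuclideanSpace.single k 1) * F x k := by
        exact Finset.sum_congr rfl fun k _ => key k
    _ = - ∫ x, ⟪F x, gradient g x⟫ := by
        rw [Finset.sum_neg_distrib]
        congr 1
        rw [← MeasureTheory.integral_finset_sum]
        · congr 1; ext x
          rw [PiLp.inner_apply]
          refine Finset.sum_congr rfl fun k _ => ?_
          simp [RCLike.inner_apply, conj_trivial, gradient_apply, mul_comm]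
        · intro k _
          apply Continuous.integrable_of_hasCompactSupport
          · exact ((hg.continuous_fderiv (by simp)).clm_apply continuous_const).mul
              ((EuclideanSpace.proj (𝕜 := ℝ) k).continuous.comp hF.continuous)
          · exact (hcompc k).mul_left

lemma term_eq (i j : ℕ) (h A B : ℝ) :
    (∫ z in (0:ℝ)..h, (z ^ (2*i+2*j) * A + ((2*i:ℝ)*((2*j:ℝ)*B)) * z ^ ((2*i-1)+(2*j-1))))
    = ((1:ℝ)/(2*((i:ℝ)+(j:ℝ))+1) * h^(2*(i+j)+1)) * A
      + (4*(i:ℝ)*(j:ℝ))/((2*((i+j):ℕ) :ℝ)-1) * h^(2*(i+j)-1) * B := by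
  rw [integral_add (f := fun z : ℝ => z ^ (2*i+2*j) * A)
      (g := fun z : ℝ => ((2*i:ℝ)*((2*j:ℝ)*B)) * z ^ ((2*i-1)+(2*j-1)))
      (((continuous_pow _).mul continuous_const).intervalIntegrable _ _)
      ((continuous_const.mul (continuous_pow _)).intervalIntegrable _ _),
    intervalIntegral.integral_mul_const, intervalIntegral.integral_const_mul, integral_pow, integral_pow]
  rcases Nat.eq_zero_or_pos i with hi | hi
  · subst hi; simp [div_eq_mul_inv, mul_comm]
  rcases Nat.eq_zero_or_pos j with hj | hj
  · subst hj; simp [div_eq_mul_inv, mul_comm]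
  have e1 : 2*i - 1 + (2*j - 1) + 1 = 2*(i+j) - 1 := by omega
  have e2 : 2*(i+j) - 1 + 1 = 2*(i+j) := by omega
  have e3 : (2:ℝ) * (((i+j) : ℕ) : ℝ) - 1 = ((2*(i+j) - 1 : ℕ) : ℝ) := by
    have : 1 ≤ 2*(i+j) := by omega
    push_cast [this]; ring
  rw [e1, e3]
  rw [show (0:ℝ)^(2*i+2*j+1) = 0 from zero_pow (by omega),
    show (0:ℝ)^(2*(i+j)-1) = 0 from zero_pow (by omega)]
  have h4 : ((2*(i+j) - 1 : ℕ) : ℝ) ≠ 0 := by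
    have : 1 ≤ 2*(i+j) - 1 := by omega
    positivity
  have h5 : ((2*i+2*j : ℕ) : ℝ) + 1 ≠ 0 := by positivity
  have e6 : 2*i+2*j+1 = 2*(i+j)+1 := by ring
  have e7 : ((2*i+2*j : ℕ):ℝ) + 1 = 2*((i:ℝ)+(j:ℝ))+1 := by push_cast; ring
  have h8 : (2*((i:ℝ)+(j:ℝ))+1) ≠ 0 := by positivity
  rw [e6, e7]
  have e9 : ((2*(i+j)-1 : ℕ) : ℝ) = 2*((i:ℝ)+(j:ℝ)) - 1 := by
    have : 1 ≤ 2*(i+j) := by omega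
    push_cast [this]; ring
  have e10 : ((2*i-1+(2*j-1) : ℕ) : ℝ) + 1 = 2*((i:ℝ)+(j:ℝ)) - 1 := by
    rw [Nat.cast_add, Nat.cast_sub (by omega), Nat.cast_sub (by omega)]
    push_cast; ring
  rw [e9] at h4 ⊢
  rw [e10]
  ring

lemma zint {n N : ℕ} (h : ℝ) (G : Fin (N+1) → EuclideanSpace ℝ (Fin n)) (P : Fin (N+1) → ℝ) :
    (∫ z in (0:ℝ)..h,
      (‖∑ i : Fin (N + 1), z ^ (2 * (i : ℕ)) • G i‖ ^ 2
        + (∑ i : Fin (N + 1), (2 * (i : ℕ) : ℝ) * z ^ (2 * (i : ℕ) - 1) * P i) ^ 2))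
    = ∑ i : Fin (N+1), ∑ j : Fin (N+1),
        (((1:ℝ)/(2*((i:ℕ):ℝ)+((j:ℕ):ℝ)*2+1) * h ^ (2*((i:ℕ)+(j:ℕ))+1)) * ⟪G i, G j⟫
          + (4*((i:ℕ):ℝ)*((j:ℕ):ℝ))/((2*(((i:ℕ)+(j:ℕ) : ℕ)) :ℝ)-1) * h ^ (2*((i:ℕ)+(j:ℕ))-1)
            * (P i * P j)) := by
  have expand : ∀ z : ℝ,
      (‖∑ i : Fin (N + 1), z ^ (2 * (i : ℕ)) • G i‖ ^ 2
        + (∑ i : Fin (N + 1), (2 * (i : ℕ) : ℝ) * z ^ (2 * (i : ℕ) - 1) * P i) ^ 2)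
      = ∑ i : Fin (N+1), ∑ j : Fin (N+1),
          (z ^ (2*(i:ℕ)+2*(j:ℕ)) * ⟪G i, G j⟫
            + ((2*(i:ℕ):ℝ))*((2*(j:ℕ):ℝ)*(P i * P j)) * z ^ ((2*(i:ℕ)-1)+(2*(j:ℕ)-1))) := by
    intro z
    rw [← real_inner_self_eq_norm_sq, sum_inner, pow_two, Finset.sum_mul_sum,
      ← Finset.sum_add_distrib]
    refine Finset.sum_congr rfl fun i _ => ?_
    rw [inner_sum, ← Finset.sum_add_distrib]
    refine Finset.sum_congr rfl fun j _ => ?_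
    rw [real_inner_smul_left, real_inner_smul_right, pow_add, pow_add]
    ring
  simp only [expand]
  rw [intervalIntegral.integral_finset_sum]
  · refine Finset.sum_congr rfl fun i _ => ?_
    rw [intervalIntegral.integral_finset_sum]
    · refine Finset.sum_congr rfl fun j _ => ?_
      rw [term_eq]
      push_cast
      ring
    · intro j _
      apply Continuous.intervalIntegrable
      fun_prop
  · intro i _
    apply Continuous.intervalIntegrable
    fun_prop


lemma hcs_inner {n : ℕ} {f g : EuclideanSpace ℝ (Fin n) → EuclideanSpace ℝ (Fin n)}
    (hg : HasCompactSupport g) : HasCompactSupport (fun x => ⟪f x, g x⟫) := by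
  apply HasCompactSupport.intro hg
  intro x hx
  rw [image_eq_zero_of_notMem_tsupport hx, inner_zero_right]


/-- Integration-by-parts identity expressing the quadratic form associated with the elliptic
operators `L_{ij}` of the Kakinuma model (upper layer) as the squared `L²` norm of the
approximate velocity field. -/
theorem stmt_16 (n N : ℕ) (hn : 1 ≤ n)
    (H : EuclideanSpace ℝ (Fin n) → ℝ) (hH : ContDiff ℝ (⊤ : ℕ∞) H) (hHpos : ∀ x, 0 < H x)
    (φ : Fin (N + 1) → EuclideanSpace ℝ (Fin n) → ℝ)
    (hφ : ∀ i, ContDiff ℝ (⊤ : ℕ∞) (φ i)) (hφsupp : ∀ i, HasCompactSupport (φ i)) :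
    ∑ i : Fin (N + 1), ∑ j : Fin (N + 1),
      ∫ x : EuclideanSpace ℝ (Fin n),
        ((- divg (fun y =>
            ((1 : ℝ) / (2 * ((i : ℕ) + (j : ℕ)) + 1)
              * H y ^ (2 * ((i : ℕ) + (j : ℕ)) + 1)) • gradient (φ j) y) x
          + (4 * (i : ℕ) * (j : ℕ) : ℝ) / ((2 * ((i : ℕ) + (j : ℕ)) : ℝ) - 1)
            * H x ^ (2 * ((i : ℕ) + (j : ℕ)) - 1) * φ j x) * φ i x)
    = ∫ x : EuclideanSpace ℝ (Fin n),
        ∫ z in (0 : ℝ)..(H x),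
          (‖∑ i : Fin (N + 1), z ^ (2 * (i : ℕ)) • gradient (φ i) x‖ ^ 2
            + (∑ i : Fin (N + 1),
                (2 * (i : ℕ) : ℝ) * z ^ (2 * (i : ℕ) - 1) * φ i x) ^ 2) := by
  classical
  have hgradc : ∀ i : Fin (N + 1), ContDiff ℝ (⊤ : ℕ∞) (gradient (φ i)) :=
    fun i => contDiff_gradient (hφ i)
  have hgrads : ∀ i : Fin (N + 1), HasCompactSupport (gradient (φ i)) :=
    fun i => hasCompactSupport_gradient (hφsupp i)
  set T : Fin (N + 1) → Fin (N + 1) → EuclideanSpace ℝ (Fin n) → ℝ := fun i j x =>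
    ((1 : ℝ) / (2 * ((i : ℕ) + (j : ℕ)) + 1) * H x ^ (2 * ((i : ℕ) + (j : ℕ)) + 1))
      * ⟪gradient (φ j) x, gradient (φ i) x⟫
    + (4 * (i : ℕ) * (j : ℕ) : ℝ) / ((2 * ((i : ℕ) + (j : ℕ)) : ℝ) - 1)
      * H x ^ (2 * ((i : ℕ) + (j : ℕ)) - 1) * φ j x * φ i x with hTdef
  have hTcont : ∀ i j, Continuous (T i j) := by
    intro i j
    apply Continuous.add
    · exact (continuous_const.mul (hH.continuous.pow _)).mul
        (Continuous.inner (continuous_gradient (hφ j)) (continuous_gradient (hφ i)))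
    · exact (((continuous_const.mul (hH.continuous.pow _)).mul (hφ j).continuous)).mul
        (hφ i).continuous
  have hTsupp : ∀ i j, HasCompactSupport (T i j) := by
    intro i j
    apply HasCompactSupport.add
    · exact (hcs_inner (hgrads i)).mul_left
    · exact (hφsupp i).mul_left
  have hTint : ∀ i j, Integrable (T i j) :=
    fun i j => (hTcont i j).integrable_of_hasCompactSupport (hTsupp i j)
  have hL : ∀ i j : Fin (N + 1),
      (∫ x : EuclideanSpace ℝ (Fin n),
        ((- divg (fun y =>
            ((1 : ℝ) / (2 * ((i : ℕ) + (j : ℕ)) + 1)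
              * H y ^ (2 * ((i : ℕ) + (j : ℕ)) + 1)) • gradient (φ j) y) x
          + (4 * (i : ℕ) * (j : ℕ) : ℝ) / ((2 * ((i : ℕ) + (j : ℕ)) : ℝ) - 1)
            * H x ^ (2 * ((i : ℕ) + (j : ℕ)) - 1) * φ j x) * φ i x))
      = ∫ x, T i j x := by
    intro i j
    set F : EuclideanSpace ℝ (Fin n) → EuclideanSpace ℝ (Fin n) := fun y =>
      ((1 : ℝ) / (2 * ((i : ℕ) + (j : ℕ)) + 1)
        * H y ^ (2 * ((i : ℕ) + (j : ℕ)) + 1)) • gradient (φ j) y with hFdef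
    have hFc : ContDiff ℝ (⊤ : ℕ∞) F := (contDiff_const.mul (hH.pow _)).smul (hgradc j)
    have hFs : HasCompactSupport F := (hgrads j).smul_left (f := fun y =>
      (1 : ℝ) / (2 * ((i : ℕ) + (j : ℕ)) + 1) * H y ^ (2 * ((i : ℕ) + (j : ℕ)) + 1))
    have int1 : Integrable (fun x => divg F x * φ i x) :=
      (((continuous_divg hFc).mul (hφ i).continuous).integrable_of_hasCompactSupport
        (hφsupp i).mul_left)
    have int2 : Integrable (fun x =>
        (4 * (i : ℕ) * (j : ℕ) : ℝ) / ((2 * ((i : ℕ) + (j : ℕ)) : ℝ) - 1)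
          * H x ^ (2 * ((i : ℕ) + (j : ℕ)) - 1) * φ j x * φ i x) :=
      ((((continuous_const.mul (hH.continuous.pow _)).mul (hφ j).continuous).mul
        (hφ i).continuous).integrable_of_hasCompactSupport (hφsupp i).mul_left)
    have int3 : Integrable (fun x => ⟪F x, gradient (φ i) x⟫) :=
      ((Continuous.inner hFc.continuous
        (continuous_gradient (hφ i))).integrable_of_hasCompactSupport
        (hcs_inner (hgrads i)))
    have step1 : (∫ x : EuclideanSpace ℝ (Fin n),
        ((- divg F x
          + (4 * (i : ℕ) * (j : ℕ) : ℝ) / ((2 * ((i : ℕ) + (j : ℕ)) : ℝ) - 1)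
            * H x ^ (2 * ((i : ℕ) + (j : ℕ)) - 1) * φ j x) * φ i x))
        = (- ∫ x, divg F x * φ i x)
          + ∫ x, (4 * (i : ℕ) * (j : ℕ) : ℝ) / ((2 * ((i : ℕ) + (j : ℕ)) : ℝ) - 1)
            * H x ^ (2 * ((i : ℕ) + (j : ℕ)) - 1) * φ j x * φ i x := by
      have int1' : Integrable (fun x => -(divg F x * φ i x)) volume := int1.neg
      rw [← MeasureTheory.integral_neg, ← MeasureTheory.integral_add int1' int2]
      congr 1; ext x; ring
    rw [step1, integral_divg_mul' hFc hFs (hφ i) (hφsupp i), neg_neg,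
      ← MeasureTheory.integral_add int3 int2]
    congr 1; ext x
    rw [hTdef]
    simp only [hFdef, real_inner_smul_left]
  calc ∑ i : Fin (N + 1), ∑ j : Fin (N + 1),
      (∫ x : EuclideanSpace ℝ (Fin n),
        ((- divg (fun y =>
            ((1 : ℝ) / (2 * ((i : ℕ) + (j : ℕ)) + 1)
              * H y ^ (2 * ((i : ℕ) + (j : ℕ)) + 1)) • gradient (φ j) y) x
          + (4 * (i : ℕ) * (j : ℕ) : ℝ) / ((2 * ((i : ℕ) + (j : ℕ)) : ℝ) - 1)
            * H x ^ (2 * ((i : ℕ) + (j : ℕ)) - 1) * φ j x) * φ i x))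
      = ∑ i : Fin (N + 1), ∑ j : Fin (N + 1), ∫ x, T i j x := by
        exact Finset.sum_congr rfl fun i _ => Finset.sum_congr rfl fun j _ => hL i j
    _ = ∫ x, ∑ i : Fin (N + 1), ∑ j : Fin (N + 1), T i j x := by
        rw [MeasureTheory.integral_finset_sum _
          (fun i _ => integrable_finset_sum _ (fun j _ => hTint i j))]
        exact Finset.sum_congr rfl fun i _ =>
          (MeasureTheory.integral_finset_sum _ (fun j _ => hTint i j)).symm
    _ = _ := by
        congr 1; ext x
        rw [zint (H x) (fun i => gradient (φ i) x) (fun i => φ i x)]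
        refine Finset.sum_congr rfl fun i _ => Finset.sum_congr rfl fun j _ => ?_
        rw [hTdef]
        rw [real_inner_comm (gradient (φ j) x) (gradient (φ i) x)]
        push_cast
        ring
end
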